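/- arXiv:2603.15657 — 7 statements merged into one kernel-verified Lean document; each statement's English description precedes it below -/
import Mathlib

section
/- Let n ≥ 4 be an even integer and x₁, …, xₙ vectors in a real or complex inner product space, with the convention x_{n+1} = x₁. Then ∑_{i=1}^{n} ‖x_i − x_{i+1}‖² = ∑_{1≤i<j≤n, 1<j−i<n−1} (−1)^{j−i} ‖x_i − x_j‖² + ‖∑_{i=1}^{n} (−1)^{i−1} x_i‖². -/
open Finset

private lemma geo_neg_one (a : ℕ) : ∀ b, a ≤ b →
    ∑ i ∈ Finset.Icc a b, (-1:ℝ)^i = ((-1)^a + (-1)^b)/2 := by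
  intro b hb
  induction b, hb using Nat.le_induction with
  | base => rw [Finset.Icc_self, Finset.sum_singleton]; ring
  | succ b hb ih =>
      rw [Finset.sum_Icc_succ_top (by omega), ih, pow_succ]; ring

theorem generalized_euler_even {𝕜 V : Type*} [RCLike 𝕜] [NormedAddCommGroup V]
    [InnerProductSpace 𝕜 V] (n : ℕ) (hn : 4 ≤ n) (heven : Even n)
    (x : ℕ → V) (hcyc : x (n + 1) = x 1) :
    ∑ i ∈ Finset.Icc 1 n, ‖x i - x (i + 1)‖ ^ 2 =
      (∑ i ∈ Finset.Icc 1 n, ∑ j ∈ Finset.Icc 1 n,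
        if i < j ∧ 1 < j - i ∧ j - i < n - 1 then
          (-1 : ℝ) ^ (j - i) * ‖x i - x j‖ ^ 2 else 0) +
      ‖∑ i ∈ Finset.Icc 1 n, ((-1 : 𝕜) ^ (i - 1)) • x i‖ ^ 2 := by
  have hz : ∑ i ∈ Finset.Icc 1 n, (-1:ℝ)^i = 0 := by
    rw [geo_neg_one 1 n (by omega), heven.neg_one_pow]; norm_num
  set R : ℕ → ℕ → ℝ := fun i j => RCLike.re (inner 𝕜 (x i) (x j) : 𝕜) with hR
  set t : ℕ → ℕ → ℝ := fun i j => (-1:ℝ)^(i+j) * ‖x i - x j‖^2 with ht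
  -- norm of the signed sum
  have hS : ‖∑ i ∈ Finset.Icc 1 n, ((-1 : 𝕜) ^ (i - 1)) • x i‖ ^ 2
      = ∑ i ∈ Finset.Icc 1 n, ∑ j ∈ Finset.Icc 1 n, (-1:ℝ)^(i+j) * R i j := by
    rw [← inner_self_eq_norm_sq (𝕜 := 𝕜), sum_inner, map_sum]
    refine Finset.sum_congr rfl fun i hi => ?_
    rw [inner_sum, map_sum]
    refine Finset.sum_congr rfl fun j hj => ?_
    rw [inner_smul_left, inner_smul_right, ← mul_assoc]
    have hc : (starRingEnd 𝕜) ((-1:𝕜)^(i-1)) * (-1:𝕜)^(j-1) = ((((-1:ℝ)^(i+j)) : ℝ) : 𝕜) := by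
      rw [map_pow, map_neg, map_one, ← pow_add]
      simp only [Finset.mem_Icc] at hi hj
      have h2 : i + j = (i - 1) + ((j - 1) + 2) := by omega
      rw [h2]
      push_cast
      ring
    rw [hc, RCLike.re_ofReal_mul]
  -- key identity: full alternating sum + 2 * ‖S‖² = 0
  have key : (∑ i ∈ Finset.Icc 1 n, ∑ j ∈ Finset.Icc 1 n, t i j)
      + 2 * (∑ i ∈ Finset.Icc 1 n, ∑ j ∈ Finset.Icc 1 n, (-1:ℝ)^(i+j) * R i j) = 0 := by
    have expand : ∀ i j : ℕ, t i j + 2*((-1:ℝ)^(i+j) * R i j)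
        = ((-1)^i * ‖x i‖^2) * (-1)^j + (-1)^i * ((-1)^j * ‖x j‖^2) := by
      intro i j
      simp only [ht, hR]
      rw [@norm_sub_sq 𝕜]
      ring
    calc (∑ i ∈ Finset.Icc 1 n, ∑ j ∈ Finset.Icc 1 n, t i j)
        + 2 * (∑ i ∈ Finset.Icc 1 n, ∑ j ∈ Finset.Icc 1 n, (-1:ℝ)^(i+j) * R i j)
        = ∑ i ∈ Finset.Icc 1 n, ∑ j ∈ Finset.Icc 1 n,
            (t i j + 2*((-1:ℝ)^(i+j) * R i j)) := by
          rw [Finset.mul_sum, ← Finset.sum_add_distrib]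
          refine Finset.sum_congr rfl fun i _ => ?_
          rw [Finset.mul_sum, ← Finset.sum_add_distrib]
      _ = ∑ i ∈ Finset.Icc 1 n, ∑ j ∈ Finset.Icc 1 n,
            (((-1:ℝ)^i * ‖x i‖^2) * (-1)^j + (-1:ℝ)^i * ((-1)^j * ‖x j‖^2)) := by
          exact Finset.sum_congr rfl fun i _ => Finset.sum_congr rfl fun j _ => expand i j
      _ = 0 := by
          simp only [Finset.sum_add_distrib, ← Finset.mul_sum, hz]
          simp [← Finset.sum_mul, hz]
  -- symmetry of t
  have tsymm : ∀ i j : ℕ, t j i = t i j := by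
    intro i j
    simp only [ht]
    rw [norm_sub_rev, Nat.add_comm]
  -- the full sum is twice the upper triangular sum
  have split1 : (∑ i ∈ Finset.Icc 1 n, ∑ j ∈ Finset.Icc 1 n, t i j)
      = 2 * ∑ i ∈ Finset.Icc 1 n, ∑ j ∈ Finset.Icc 1 n, (if i < j then t i j else 0) := by
    have h1 : ∀ i j : ℕ, t i j = (if i < j then t i j else 0) + (if j < i then t i j else 0) := by
      intro i j
      rcases lt_trichotomy i j with h|h|h
      · simp [h, (lt_asymm h)]
      · subst h; simp [ht]
      · simp [h, (lt_asymm h)]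
    calc (∑ i ∈ Finset.Icc 1 n, ∑ j ∈ Finset.Icc 1 n, t i j)
        = (∑ i ∈ Finset.Icc 1 n, ∑ j ∈ Finset.Icc 1 n, (if i < j then t i j else 0))
          + (∑ i ∈ Finset.Icc 1 n, ∑ j ∈ Finset.Icc 1 n, (if j < i then t i j else 0)) := by
          rw [← Finset.sum_add_distrib]
          refine Finset.sum_congr rfl fun i _ => ?_
          rw [← Finset.sum_add_distrib]
          exact Finset.sum_congr rfl fun j _ => h1 i j
      _ = 2 * ∑ i ∈ Finset.Icc 1 n, ∑ j ∈ Finset.Icc 1 n, (if i < j then t i j else 0) := by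
          rw [Finset.sum_comm (f := fun i j => if j < i then t i j else 0)]
          have : ∀ i j : ℕ, (if i < j then t j i else 0) = (if i < j then t i j else 0) := by
            intro i j; rw [tsymm]
          rw [Finset.sum_congr rfl fun i _ => Finset.sum_congr rfl fun j _ => this i j]
          ring
  -- split the upper triangular region into three parts
  have split2 : (∑ i ∈ Finset.Icc 1 n, ∑ j ∈ Finset.Icc 1 n, (if i < j then t i j else 0))
      = (∑ i ∈ Finset.Icc 1 n, ∑ j ∈ Finset.Icc 1 n, (if i < j ∧ j - i = 1 then t i j else 0))
      + (∑ i ∈ Finset.Icc 1 n, ∑ j ∈ Finset.Icc 1 n,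
          (if i < j ∧ 1 < j - i ∧ j - i < n - 1 then t i j else 0))
      + (∑ i ∈ Finset.Icc 1 n, ∑ j ∈ Finset.Icc 1 n,
          (if i < j ∧ n - 1 ≤ j - i then t i j else 0)) := by
    rw [← Finset.sum_add_distrib, ← Finset.sum_add_distrib]
    refine Finset.sum_congr rfl fun i _ => ?_
    rw [← Finset.sum_add_distrib, ← Finset.sum_add_distrib]
    refine Finset.sum_congr rfl fun j _ => ?_
    split_ifs <;> first | (exfalso; omega) | ring
  -- adjacent part
  have hadj : (∑ i ∈ Finset.Icc 1 n, ∑ j ∈ Finset.Icc 1 n,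
      (if i < j ∧ j - i = 1 then t i j else 0))
      = - ∑ i ∈ Finset.Icc 1 (n-1), ‖x i - x (i+1)‖^2 := by
    have step1 : ∀ i : ℕ, (∑ j ∈ Finset.Icc 1 n, (if i < j ∧ j - i = 1 then t i j else 0))
        = if i + 1 ∈ Finset.Icc 1 n then t i (i+1) else 0 := by
      intro i
      rw [← Finset.sum_ite_eq' (Finset.Icc 1 n) (i+1) (fun j => t i j)]
      refine Finset.sum_congr rfl fun j _ => ?_
      congr 1
      simp only [eq_iff_iff]
      omega
    rw [Finset.sum_congr rfl fun i _ => step1 i]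
    rw [← Finset.sum_subset (Finset.Icc_subset_Icc_right (by omega : n - 1 ≤ n))
      (fun i hi hni => by
        rw [if_neg]
        simp only [Finset.mem_Icc] at hi hni ⊢
        omega)]
    rw [← Finset.sum_neg_distrib]
    refine Finset.sum_congr rfl fun i hi => ?_
    simp only [Finset.mem_Icc] at hi
    rw [if_pos (by simp only [Finset.mem_Icc]; omega)]
    simp only [ht]
    rw [Odd.neg_one_pow ⟨i, by omega⟩]
    ring
  -- wrap-around part
  have hwrap : (∑ i ∈ Finset.Icc 1 n, ∑ j ∈ Finset.Icc 1 n,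
      (if i < j ∧ n - 1 ≤ j - i then t i j else 0)) = - ‖x 1 - x n‖^2 := by
    have step1 : ∀ i ∈ Finset.Icc 1 n, (∑ j ∈ Finset.Icc 1 n,
        (if i < j ∧ n - 1 ≤ j - i then t i j else 0))
        = if i = 1 then t 1 n else 0 := by
      intro i hi
      simp only [Finset.mem_Icc] at hi
      by_cases h1 : i = 1
      · subst h1
        rw [if_pos rfl]
        have hcg : (∑ j ∈ Finset.Icc 1 n, if 1 < j ∧ n - 1 ≤ j - 1 then t 1 j else 0)
            = ∑ j ∈ Finset.Icc 1 n, if j = n then t 1 j else 0 := by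
          refine Finset.sum_congr rfl fun j hj => ?_
          simp only [Finset.mem_Icc] at hj
          congr 1
          simp only [eq_iff_iff]
          omega
        rw [hcg, Finset.sum_ite_eq' (Finset.Icc 1 n) n (fun j => t 1 j),
          if_pos (by simp only [Finset.mem_Icc]; omega)]
      · rw [if_neg h1]
        refine Finset.sum_eq_zero fun j hj => ?_
        simp only [Finset.mem_Icc] at hj
        rw [if_neg (by omega)]
    rw [Finset.sum_congr rfl step1, Finset.sum_ite_eq' (Finset.Icc 1 n) 1 (fun _ => t 1 n)]
    rw [if_pos (by simp only [Finset.mem_Icc]; omega)]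
    simp only [ht]
    rw [Odd.neg_one_pow (by obtain ⟨m, hm⟩ := heven; exact ⟨m, by omega⟩)]
    ring
  -- middle part equals the goal's middle sum
  have hmid : (∑ i ∈ Finset.Icc 1 n, ∑ j ∈ Finset.Icc 1 n,
        if i < j ∧ 1 < j - i ∧ j - i < n - 1 then
          (-1 : ℝ) ^ (j - i) * ‖x i - x j‖ ^ 2 else 0)
      = (∑ i ∈ Finset.Icc 1 n, ∑ j ∈ Finset.Icc 1 n,
          (if i < j ∧ 1 < j - i ∧ j - i < n - 1 then t i j else 0)) := by
    refine Finset.sum_congr rfl fun i _ => Finset.sum_congr rfl fun j _ => ?_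
    by_cases h : i < j ∧ 1 < j - i ∧ j - i < n - 1
    · rw [if_pos h, if_pos h]
      simp only [ht]
      have h2 : i + j = (j - i) + 2*i := by omega
      rw [h2, pow_add, pow_mul, neg_one_sq, one_pow, mul_one]
    · rw [if_neg h, if_neg h]
  -- split the LHS
  have hsplit : ∑ i ∈ Finset.Icc 1 n, ‖x i - x (i + 1)‖ ^ 2
      = (∑ i ∈ Finset.Icc 1 (n-1), ‖x i - x (i+1)‖^2) + ‖x 1 - x n‖^2 := by
    have hIcc : Finset.Icc 1 n = insert n (Finset.Icc 1 (n-1)) := by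
      ext k
      simp only [Finset.mem_insert, Finset.mem_Icc]
      omega
    rw [hIcc, Finset.sum_insert (by simp only [Finset.mem_Icc]; omega), hcyc,
      norm_sub_rev, add_comm]
  rw [hsplit, hmid, hS]
  rw [split1, split2, hadj, hwrap] at key
  linarith
end

section
/- Let n ≥ 2 and let A₁, …, A_{2n} be points in ℝ^m. Let G₁ be the centroid of the odd-indexed points A₁, A₃, …, A_{2n−1} and G₂ the centroid of the even-indexed points A₂, A₄, …, A_{2n}. Then ∑_{i=1}^{2n} |A_i A_{i+1}|² = ∑_{1≤i<j≤2n, 1<j−i<2n−1} (−1)^{j−i} |A_i A_j|² + n² |G₁G₂|², with A_{2n+1} = A₁. -/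
open Finset

private lemma pair_sum {M : Type*} [AddCommMonoid M] (n : ℕ) (g : ℕ → M) :
    ∑ i ∈ range (2 * n), g i = ∑ k ∈ range n, (g (2 * k) + g (2 * k + 1)) := by
  induction n with
  | zero => simp
  | succ n ih =>
    rw [Nat.mul_succ, sum_range_succ, sum_range_succ, sum_range_succ, ih, add_assoc]

private lemma Icc_reindex {M : Type*} [AddCommMonoid M] (n : ℕ) (f : ℕ → M) :
    ∑ i ∈ Finset.Icc 1 n, f i = ∑ i ∈ Finset.range n, f (1 + i) := by
  rw [← Finset.Ico_add_one_right_eq_Icc, Finset.sum_Ico_eq_sum_range]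
  simp

private lemma neg_one_sq_pow (i : ℕ) : (-1 : ℝ) ^ i * (-1) ^ i = 1 := by
  rw [← pow_add, ← two_mul, pow_mul]
  norm_num

private lemma core {E : Type*} [NormedAddCommGroup E] [InnerProductSpace ℝ E]
    (s : Finset ℕ) (ε : ℕ → ℝ) (h : ∑ i ∈ s, ε i = 0) (A : ℕ → E) :
    ∑ i ∈ s, ∑ j ∈ s, ε i * ε j * dist (A i) (A j) ^ 2
      = -2 * ‖∑ i ∈ s, ε i • A i‖ ^ 2 := by
  have hnorm : ‖∑ i ∈ s, ε i • A i‖ ^ 2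
      = ∑ i ∈ s, ∑ j ∈ s, ε i * ε j * (inner ℝ (A i) (A j) : ℝ) := by
    rw [← real_inner_self_eq_norm_sq, sum_inner]
    refine Finset.sum_congr rfl fun i _ => ?_
    rw [real_inner_smul_left, inner_sum, mul_sum]
    refine Finset.sum_congr rfl fun j _ => ?_
    rw [real_inner_smul_right]; ring
  have hd : ∀ i j, dist (A i) (A j) ^ 2
      = ‖A i‖ ^ 2 - 2 * (inner ℝ (A i) (A j) : ℝ) + ‖A j‖ ^ 2 := fun i j => by
    rw [dist_eq_norm, norm_sub_sq_real]
  have key : ∀ i, ∑ j ∈ s, ε i * ε j * dist (A i) (A j) ^ 2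
      = (ε i * ‖A i‖ ^ 2) * (∑ j ∈ s, ε j)
        + ε i * (∑ j ∈ s, ε j * ‖A j‖ ^ 2)
        - 2 * ∑ j ∈ s, ε i * ε j * (inner ℝ (A i) (A j) : ℝ) := by
    intro i
    rw [Finset.mul_sum, Finset.mul_sum, Finset.mul_sum, ← Finset.sum_add_distrib,
      ← Finset.sum_sub_distrib]
    refine Finset.sum_congr rfl fun j _ => ?_
    rw [hd]; ring
  calc ∑ i ∈ s, ∑ j ∈ s, ε i * ε j * dist (A i) (A j) ^ 2
      = ∑ i ∈ s, ((ε i * ‖A i‖ ^ 2) * (∑ j ∈ s, ε j)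
          + ε i * (∑ j ∈ s, ε j * ‖A j‖ ^ 2)
          - 2 * ∑ j ∈ s, ε i * ε j * (inner ℝ (A i) (A j) : ℝ)) :=
        Finset.sum_congr rfl fun i _ => key i
    _ = -2 * ‖∑ i ∈ s, ε i • A i‖ ^ 2 := by
        rw [h]
        simp only [mul_zero, zero_add]
        rw [Finset.sum_sub_distrib, ← Finset.sum_mul, h, zero_mul, zero_sub,
          ← Finset.mul_sum, hnorm]
        ring

theorem generalized_euler_centroids (m n : ℕ) (hn : 2 ≤ n)
    (A : ℕ → EuclideanSpace ℝ (Fin m)) (hcyc : A (2 * n + 1) = A 1) :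
    ∑ i ∈ Finset.Icc 1 (2 * n), dist (A i) (A (i + 1)) ^ 2 =
      (∑ i ∈ Finset.Icc 1 (2 * n), ∑ j ∈ Finset.Icc 1 (2 * n),
        if i < j ∧ 1 < j - i ∧ j - i < 2 * n - 1 then
          (-1 : ℝ) ^ (j - i) * dist (A i) (A j) ^ 2 else 0) +
      (n : ℝ) ^ 2 *
        dist ((n : ℝ)⁻¹ • ∑ k ∈ Finset.range n, A (2 * k + 1))
             ((n : ℝ)⁻¹ • ∑ k ∈ Finset.range n, A (2 * k + 2)) ^ 2 := by
  have hn0 : (n : ℝ) ≠ 0 := Nat.cast_ne_zero.mpr (by omega)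
  set S : Finset ℕ := Finset.Icc 1 (2 * n) with hS
  set ε : ℕ → ℝ := fun i => (-1) ^ i with hε
  set t : ℕ → ℕ → ℝ := fun i j => ε i * ε j * dist (A i) (A j) ^ 2 with ht
  -- sum of signs is zero
  have hsum0 : ∑ i ∈ S, ε i = 0 := by
    rw [hS, Icc_reindex, pair_sum]
    simp [hε, pow_add, pow_mul]
  -- the signed vector sum
  have hV : ∑ i ∈ S, ε i • A i
      = (∑ k ∈ range n, A (2 * k + 2)) - (∑ k ∈ range n, A (2 * k + 1)) := by
    rw [hS, Icc_reindex, pair_sum, ← Finset.sum_sub_distrib]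
    refine Finset.sum_congr rfl fun k _ => ?_
    rw [show 1 + 2 * k = 2 * k + 1 from by ring, show 1 + (2 * k + 1) = 2 * k + 2 from by ring]
    simp only [hε, pow_succ, pow_mul]
    norm_num
    abel
  have hcore := core S ε hsum0 A
  have tsymm : ∀ i j, t i j = t j i := fun i j => by
    simp only [ht]; rw [dist_comm]; ring
  -- full sum = 2 * half sum
  have hfull : ∑ i ∈ S, ∑ j ∈ S, t i j
      = 2 * ∑ i ∈ S, ∑ j ∈ S, (if i < j then t i j else 0) := by
    have htri : ∀ i j, t i j = (if i < j then t i j else 0)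
        + (if j < i then t i j else 0) + (if i = j then t i j else 0) := by
      intro i j
      rcases lt_trichotomy i j with h | h | h
      · simp [h, Nat.lt_asymm h, h.ne]
      · simp [h, lt_irrefl]
      · simp [h, Nat.lt_asymm h, h.ne']
    have hswap : ∑ i ∈ S, ∑ j ∈ S, (if j < i then t i j else 0)
        = ∑ i ∈ S, ∑ j ∈ S, (if i < j then t i j else 0) := by
      rw [Finset.sum_comm]
      exact Finset.sum_congr rfl fun i _ => Finset.sum_congr rfl fun j _ => by
        rw [tsymm]
    have hdiag : ∑ i ∈ S, ∑ j ∈ S, (if i = j then t i j else 0) = 0 := by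
      refine Finset.sum_eq_zero fun i hi => ?_
      rw [Finset.sum_ite_eq S i (t i), if_pos hi]
      simp [ht]
    calc ∑ i ∈ S, ∑ j ∈ S, t i j
        = ∑ i ∈ S, ∑ j ∈ S, ((if i < j then t i j else 0)
            + (if j < i then t i j else 0) + (if i = j then t i j else 0)) :=
          Finset.sum_congr rfl fun i _ => Finset.sum_congr rfl fun j _ => htri i j
      _ = (∑ i ∈ S, ∑ j ∈ S, (if i < j then t i j else 0))
            + (∑ i ∈ S, ∑ j ∈ S, (if j < i then t i j else 0))
            + ∑ i ∈ S, ∑ j ∈ S, (if i = j then t i j else 0) := by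
          simp [Finset.sum_add_distrib]
      _ = 2 * ∑ i ∈ S, ∑ j ∈ S, (if i < j then t i j else 0) := by
          rw [hswap, hdiag]; ring
  have hhalf : ∑ i ∈ S, ∑ j ∈ S, (if i < j then t i j else 0)
      = -‖∑ i ∈ S, ε i • A i‖ ^ 2 := by
    rw [hfull] at hcore; linarith
  -- sign identity
  have hsign : ∀ i j : ℕ, i < j → (-1 : ℝ) ^ (j - i) = ε i * ε j := by
    intro i j hij
    have h1 : (-1 : ℝ) ^ (j - i) = (-1) ^ (j - i) * ((-1) ^ i * (-1) ^ i) := by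
      rw [neg_one_sq_pow, mul_one]
    rw [h1, hε]
    rw [show (-1 : ℝ) ^ (j - i) * ((-1) ^ i * (-1) ^ i) = ((-1) ^ (j - i) * (-1) ^ i) * (-1) ^ i
      from by ring, ← pow_add, show j - i + i = j from by omega]
    ring
  -- split the half sum into three pieces
  have hsplit : ∀ i ∈ S, ∀ j ∈ S, (if i < j then t i j else 0)
      = (if j = i + 1 then t i j else 0)
      + (if i = 1 ∧ j = 2 * n then t i j else 0)
      + (if i < j ∧ 1 < j - i ∧ j - i < 2 * n - 1 then
          (-1 : ℝ) ^ (j - i) * dist (A i) (A j) ^ 2 else 0) := by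
    intro i hi j hj
    rw [hS, Finset.mem_Icc] at hi hj
    have hmid : (if i < j ∧ 1 < j - i ∧ j - i < 2 * n - 1 then
        (-1 : ℝ) ^ (j - i) * dist (A i) (A j) ^ 2 else 0)
        = (if i < j ∧ 1 < j - i ∧ j - i < 2 * n - 1 then t i j else 0) := by
      split_ifs with h
      · rw [hsign i j h.1]
      · rfl
    rw [hmid]
    by_cases h1 : i < j
    · by_cases h2 : j = i + 1
      · have c2 : ¬(i = 1 ∧ j = 2 * n) := by omega
        have c3 : ¬(i < j ∧ 1 < j - i ∧ j - i < 2 * n - 1) := by omega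
        rw [if_pos h1, if_pos h2, if_neg c2, if_neg c3]; ring
      · by_cases h3 : i = 1 ∧ j = 2 * n
        · have c3 : ¬(i < j ∧ 1 < j - i ∧ j - i < 2 * n - 1) := by omega
          rw [if_pos h1, if_neg h2, if_pos h3, if_neg c3]; ring
        · have c3 : i < j ∧ 1 < j - i ∧ j - i < 2 * n - 1 := by omega
          rw [if_pos h1, if_neg h2, if_neg h3, if_pos c3]; ring
    · have c1 : ¬j = i + 1 := by omega
      have c2 : ¬(i = 1 ∧ j = 2 * n) := by omega
      have c3 : ¬(i < j ∧ 1 < j - i ∧ j - i < 2 * n - 1) := by omega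
      rw [if_neg h1, if_neg c1, if_neg c2, if_neg c3]; ring
  have hsplitsum : ∑ i ∈ S, ∑ j ∈ S, (if i < j then t i j else 0)
      = (∑ i ∈ S, ∑ j ∈ S, (if j = i + 1 then t i j else 0))
      + (∑ i ∈ S, ∑ j ∈ S, (if i = 1 ∧ j = 2 * n then t i j else 0))
      + (∑ i ∈ S, ∑ j ∈ S, (if i < j ∧ 1 < j - i ∧ j - i < 2 * n - 1 then
          (-1 : ℝ) ^ (j - i) * dist (A i) (A j) ^ 2 else 0)) := by
    rw [← Finset.sum_add_distrib, ← Finset.sum_add_distrib]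
    refine Finset.sum_congr rfl fun i hi => ?_
    rw [← Finset.sum_add_distrib, ← Finset.sum_add_distrib]
    exact Finset.sum_congr rfl fun j hj => hsplit i hi j hj
  -- evaluate piece 1
  have hts : ∀ i, t i (i + 1) = -(dist (A i) (A (i + 1)) ^ 2) := by
    intro i
    simp only [ht, hε, pow_succ]
    rw [show (-1 : ℝ) ^ i * ((-1) ^ i * -1) = -((-1 : ℝ) ^ i * (-1) ^ i) from by ring,
      neg_one_sq_pow]
    ring
  have hp1 : ∑ i ∈ S, ∑ j ∈ S, (if j = i + 1 then t i j else 0)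
      = -∑ i ∈ Finset.Icc 1 (2 * n - 1), dist (A i) (A (i + 1)) ^ 2 := by
    have hinner : ∀ i, ∑ j ∈ S, (if j = i + 1 then t i j else 0)
        = if i + 1 ∈ S then t i (i + 1) else 0 := fun i =>
      Finset.sum_ite_eq' S (i + 1) (t i)
    rw [Finset.sum_congr rfl fun i _ => hinner i, ← Finset.sum_filter]
    have hfil : S.filter (fun i => i + 1 ∈ S) = Finset.Icc 1 (2 * n - 1) := by
      ext i
      simp only [hS, Finset.mem_filter, Finset.mem_Icc]
      omega
    rw [hfil, ← Finset.sum_neg_distrib]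
    exact Finset.sum_congr rfl fun i _ => hts i
  -- evaluate piece 2
  have hp2 : ∑ i ∈ S, ∑ j ∈ S, (if i = 1 ∧ j = 2 * n then t i j else 0)
      = -(dist (A 1) (A (2 * n)) ^ 2) := by
    have hstep : ∀ i j, (if i = 1 ∧ j = 2 * n then t i j else 0)
        = (if j = 2 * n then (if i = 1 then t i j else 0) else 0) := by
      intro i j
      by_cases h1 : i = 1 <;> by_cases h2 : j = 2 * n <;> simp [h1, h2]
    have h2nS : 2 * n ∈ S := by rw [hS, Finset.mem_Icc]; omega
    have h1S : (1 : ℕ) ∈ S := by rw [hS, Finset.mem_Icc]; omega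
    calc ∑ i ∈ S, ∑ j ∈ S, (if i = 1 ∧ j = 2 * n then t i j else 0)
        = ∑ i ∈ S, (if i = 1 then t i (2 * n) else 0) := by
          refine Finset.sum_congr rfl fun i _ => ?_
          rw [Finset.sum_congr rfl fun j _ => hstep i j,
            Finset.sum_ite_eq' S (2 * n) (fun j => if i = 1 then t i j else 0), if_pos h2nS]
      _ = t 1 (2 * n) := by
          rw [Finset.sum_ite_eq' S 1 (fun i => t i (2 * n)), if_pos h1S]
      _ = -(dist (A 1) (A (2 * n)) ^ 2) := by
          simp only [ht, hε, pow_one, pow_mul]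
          norm_num
  -- split LHS
  have hLHS : ∑ i ∈ S, dist (A i) (A (i + 1)) ^ 2
      = (∑ i ∈ Finset.Icc 1 (2 * n - 1), dist (A i) (A (i + 1)) ^ 2)
        + dist (A 1) (A (2 * n)) ^ 2 := by
    rw [hS, show 2 * n = (2 * n - 1) + 1 from by omega,
      Finset.sum_Icc_succ_top (by omega : 1 ≤ (2 * n - 1) + 1)]
    congr 1
    rw [show 2 * n - 1 + 1 = 2 * n from by omega, hcyc, dist_comm]
  -- centroid distance
  have hG : (n : ℝ) ^ 2 *
        dist ((n : ℝ)⁻¹ • ∑ k ∈ Finset.range n, A (2 * k + 1))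
             ((n : ℝ)⁻¹ • ∑ k ∈ Finset.range n, A (2 * k + 2)) ^ 2
      = ‖∑ i ∈ S, ε i • A i‖ ^ 2 := by
    rw [hV, dist_eq_norm, ← smul_sub, norm_smul, norm_sub_rev]
    rw [Real.norm_eq_abs, abs_of_nonneg (by positivity)]
    rw [mul_pow]
    field_simp
  -- assemble
  rw [hLHS]
  rw [hhalf] at hsplitsum
  rw [hp1, hp2] at hsplitsum
  rw [hG]
  linarith [hsplitsum]
end

section
/- Let n ≥ 2 and let A₁, …, A_{2n} be points in ℝ^m, with G₁ the centroid of the odd-indexed points and G₂ the centroid of the even-indexed points. Then ∑_{i=1}^{2n} |A_i A_{i+1}|² = ∑_{1≤i<j≤2n, 1<j−i<2n−1} (−1)^{j−i} |A_i A_j|² holds if and only if G₁ = G₂. -/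
/-!
With signs `ε i = (-1) ^ i`, which sum to zero, expanding `‖A i - A j‖²` gives
`∑_{i<j} ε i ε j ‖A i - A j‖² = -‖∑ ε i • A i‖²`. The sides `(i, i + 1)` and `(1, 2n)` of the
`2n`-gon are exactly the pairs with `ε i ε j = -1` that the right-hand side leaves out, so the
right-hand side equals the left-hand side minus `‖∑ ε i • A i‖²`, and `∑ ε i • A i = n (G₂ - G₁)`.
-/

open Finset RealInnerProductSpace

theorem sum_sum_mul_mul_dist_sq_of_sum_eq_zero {ι E : Type*} [NormedAddCommGroup E]
    [InnerProductSpace ℝ E] (s : Finset ι) (w : ι → ℝ) (x : ι → E) (hw : ∑ i ∈ s, w i = 0) :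
    ∑ i ∈ s, ∑ j ∈ s, w i * w j * dist (x i) (x j) ^ 2 = -2 * ‖∑ i ∈ s, w i • x i‖ ^ 2 := by
  have hnorm : ‖∑ i ∈ s, w i • x i‖ ^ 2 = ∑ i ∈ s, ∑ j ∈ s, w i * w j * ⟪x i, x j⟫ := by
    rw [← real_inner_self_eq_norm_sq, sum_inner]
    simp only [inner_sum, real_inner_smul_left, real_inner_smul_right]
    exact sum_congr rfl fun i _ => sum_congr rfl fun j _ => by ring
  calc ∑ i ∈ s, ∑ j ∈ s, w i * w j * dist (x i) (x j) ^ 2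
      = ∑ i ∈ s, ∑ j ∈ s, (w i * ‖x i‖ ^ 2 * w j + w i * (w j * ‖x j‖ ^ 2)
          - 2 * (w i * w j * ⟪x i, x j⟫)) :=
        sum_congr rfl fun i _ => sum_congr rfl fun j _ => by
          rw [dist_eq_norm, norm_sub_sq_real]; ring
    _ = (∑ i ∈ s, w i * ‖x i‖ ^ 2) * ∑ j ∈ s, w j + (∑ i ∈ s, w i) * ∑ j ∈ s, w j * ‖x j‖ ^ 2
          - 2 * ∑ i ∈ s, ∑ j ∈ s, w i * w j * ⟪x i, x j⟫ := by
        rw [sum_mul_sum, sum_mul_sum, mul_sum, ← sum_add_distrib, ← sum_sub_distrib]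
        refine sum_congr rfl fun i _ => ?_
        rw [mul_sum, ← sum_add_distrib, ← sum_sub_distrib]
    _ = -2 * ‖∑ i ∈ s, w i • x i‖ ^ 2 := by
        rw [hw, hnorm]
        ring

theorem sum_sum_ite_lt_of_symm {ι M : Type*} [LinearOrder ι] [AddCommMonoid M]
    (s : Finset ι) (f : ι → ι → M) (hsymm : ∀ i j, f i j = f j i) (hdiag : ∀ i, f i i = 0) :
    2 • ∑ i ∈ s, ∑ j ∈ s, (if i < j then f i j else 0) = ∑ i ∈ s, ∑ j ∈ s, f i j := by
  have hsplit : ∀ i j, f i j = (if i < j then f i j else 0) + (if j < i then f j i else 0) := by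
    intro i j
    rcases lt_trichotomy i j with h | rfl | h
    · simp [h, h.not_gt]
    · simp [hdiag]
    · simp [h, h.not_gt, hsymm i j]
  rw [two_nsmul]
  nth_rewrite 2 [sum_comm]
  rw [← sum_add_distrib]
  refine sum_congr rfl fun i _ => ?_
  rw [← sum_add_distrib]
  exact sum_congr rfl fun j _ => (hsplit i j).symm

theorem sum_sum_ite_lt_mul_mul_dist_sq_of_sum_eq_zero {ι E : Type*} [LinearOrder ι]
    [NormedAddCommGroup E] [InnerProductSpace ℝ E] (s : Finset ι) (w : ι → ℝ) (x : ι → E)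
    (hw : ∑ i ∈ s, w i = 0) :
    ∑ i ∈ s, ∑ j ∈ s, (if i < j then w i * w j * dist (x i) (x j) ^ 2 else 0) =
      -‖∑ i ∈ s, w i • x i‖ ^ 2 := by
  have hhalf := sum_sum_ite_lt_of_symm s (fun i j => w i * w j * dist (x i) (x j) ^ 2)
    (fun i j => by rw [mul_comm (w i), dist_comm]) (fun i => by simp)
  rw [sum_sum_mul_mul_dist_sq_of_sum_eq_zero s w x hw, two_nsmul] at hhalf
  linarith

theorem sum_Icc_neg_one_pow_smul {V : Type*} [AddCommGroup V] [Module ℝ V] (A : ℕ → V) (n : ℕ) :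
    ∑ i ∈ Icc 1 (2 * n), (-1 : ℝ) ^ i • A i =
      ∑ k ∈ range n, A (2 * k + 2) - ∑ k ∈ range n, A (2 * k + 1) := by
  induction n with
  | zero => simp
  | succ k ih =>
    rw [show 2 * (k + 1) = 2 * k + 1 + 1 by ring, sum_Icc_succ_top (by omega),
      sum_Icc_succ_top (by omega), ih, sum_range_succ, sum_range_succ,
      Odd.neg_one_pow ⟨k, rfl⟩, Even.neg_one_pow ⟨k + 1, by ring⟩, neg_one_smul, one_smul]
    abel

theorem sum_Icc_neg_one_pow (n : ℕ) : ∑ i ∈ Icc 1 (2 * n), (-1 : ℝ) ^ i = 0 := by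
  simpa using sum_Icc_neg_one_pow_smul (fun _ => (1 : ℝ)) n

-- On the sides `(i, i + 1)` and `(1, 2n)` of the `2n`-gon the sign `(-1) ^ (i + j)` is `-1`.
theorem ite_diagonal_neg_one_pow_eq {n i j : ℕ} (hn : 2 ≤ n) (hi : i ∈ Icc 1 (2 * n))
    (hj : j ∈ Icc 1 (2 * n)) (c : ℝ) :
    (if i < j ∧ 1 < j - i ∧ j - i < 2 * n - 1 then (-1 : ℝ) ^ (j - i) * c else 0) =
      (if i < j then (-1) ^ i * (-1) ^ j * c else 0) + (if j = i + 1 then c else 0) +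
        (if i = 1 ∧ j = 2 * n then c else 0) := by
  rw [mem_Icc] at hi hj
  rcases le_or_gt j i with hji | hij
  · rw [if_neg (by omega), if_neg (by omega), if_neg (by omega), if_neg (by omega)]
    ring
  obtain ⟨k, rfl⟩ := Nat.exists_eq_add_of_lt hij
  have hsign : (-1 : ℝ) ^ i * (-1) ^ (i + k + 1) = (-1) ^ (k + 1) := by
    rw [add_assoc, pow_add, ← mul_assoc, ← pow_add, ← two_mul, pow_mul, neg_one_sq, one_pow,
      one_mul]
  rw [if_pos hij, hsign, show i + k + 1 - i = k + 1 by omega]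
  rcases (show k = 0 ∨ (i = 1 ∧ k + 2 = 2 * n) ∨ (0 < k ∧ k + 2 < 2 * n) by omega) with
    rfl | ⟨rfl, hcorner⟩ | hdiag
  · rw [if_neg (by omega), if_pos rfl, if_neg (by omega)]
    ring
  · rw [if_neg (by omega), if_neg (by omega), if_pos ⟨rfl, by omega⟩,
      Odd.neg_one_pow ⟨n - 1, by omega⟩]
    ring
  · rw [if_pos ⟨hij, by omega, by omega⟩, if_neg (by omega), if_neg (by omega)]
    ring

theorem sum_Icc_dist_succ_sq_eq_of_cyclic {E : Type*} [PseudoMetricSpace E] {N : ℕ} (hN : 1 ≤ N)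
    (A : ℕ → E) (hcyc : A (N + 1) = A 1) :
    ∑ i ∈ Icc 1 N, dist (A i) (A (i + 1)) ^ 2 =
      ∑ i ∈ Icc 1 N, ∑ j ∈ Icc 1 N, (if j = i + 1 then dist (A i) (A j) ^ 2 else 0) +
        ∑ i ∈ Icc 1 N, ∑ j ∈ Icc 1 N, (if i = 1 ∧ j = N then dist (A i) (A j) ^ 2 else 0) := by
  have h1 : 1 ∈ Icc 1 N := mem_Icc.2 ⟨le_rfl, hN⟩
  have hN' : N ∈ Icc 1 N := mem_Icc.2 ⟨hN, le_rfl⟩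
  have hsplit : ∀ i ∈ Icc 1 N, dist (A i) (A (i + 1)) ^ 2 =
      (if i + 1 ∈ Icc 1 N then dist (A i) (A (i + 1)) ^ 2 else 0) +
        (if i = N then dist (A i) (A (i + 1)) ^ 2 else 0) := by
    intro i hi
    simp only [mem_Icc] at hi ⊢
    split_ifs <;> first | omega | ring
  simp only [sum_ite_eq', ite_and, sum_ite_irrel, sum_const_zero, h1, hN', if_true]
  rw [sum_congr rfl hsplit, sum_add_distrib, sum_ite_eq', if_pos hN', hcyc, dist_comm]

theorem generalized_parallelogram_iff (m n : ℕ) (hn : 2 ≤ n)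
    (A : ℕ → EuclideanSpace ℝ (Fin m)) (hcyc : A (2 * n + 1) = A 1) :
    (∑ i ∈ Finset.Icc 1 (2 * n), dist (A i) (A (i + 1)) ^ 2 =
      ∑ i ∈ Finset.Icc 1 (2 * n), ∑ j ∈ Finset.Icc 1 (2 * n),
        if i < j ∧ 1 < j - i ∧ j - i < 2 * n - 1 then
          (-1 : ℝ) ^ (j - i) * dist (A i) (A j) ^ 2 else 0) ↔
      (n : ℝ)⁻¹ • ∑ k ∈ Finset.range n, A (2 * k + 1) =
        (n : ℝ)⁻¹ • ∑ k ∈ Finset.range n, A (2 * k + 2) := by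
  have hdiagonals : (∑ i ∈ Icc 1 (2 * n), ∑ j ∈ Icc 1 (2 * n),
      if i < j ∧ 1 < j - i ∧ j - i < 2 * n - 1 then
        (-1 : ℝ) ^ (j - i) * dist (A i) (A j) ^ 2 else 0) =
      -‖∑ i ∈ Icc 1 (2 * n), (-1 : ℝ) ^ i • A i‖ ^ 2 +
        ∑ i ∈ Icc 1 (2 * n), dist (A i) (A (i + 1)) ^ 2 := by
    rw [sum_congr rfl fun i hi => sum_congr rfl fun j hj => ite_diagonal_neg_one_pow_eq hn hi hj _]
    simp only [sum_add_distrib]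
    rw [sum_sum_ite_lt_mul_mul_dist_sq_of_sum_eq_zero _ _ A (sum_Icc_neg_one_pow n), add_assoc,
      ← sum_Icc_dist_succ_sq_eq_of_cyclic (by omega) A hcyc]
  rw [hdiagonals, smul_right_inj (by positivity), eq_comm (a := ∑ k ∈ range n, A (2 * k + 1)),
    ← sub_eq_zero (a := ∑ k ∈ range n, A (2 * k + 2)), ← sum_Icc_neg_one_pow_smul,
    ← norm_eq_zero, ← sq_eq_zero_iff]
  constructor <;> intro h <;> linarith
end

section
/- Let n, k ∈ ℕ with 4 ≤ k ≤ n and let 1 ≤ p < q ≤ n. Define c_{pq} = ∑_{r=0}^{k−2} (−1)^{r+1} C(n−q+p−1, k−2−r)·C(q−p−1, r). Then in the expansion of ∑_{1≤i₁<⋯<i_k≤n} ‖x_{i₁} − x_{i₂} + ⋯ + (−1)^{k−1} x_{i_k}‖² for vectors x₁,…,xₙ in a real inner product space, the coefficient of the cross term ⟨x_p, x_q⟩ equals 2c_{pq}. -/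
open scoped RealInnerProductSpace

open Finset in
lemma CTC_count_contains (A : Finset ℕ) (a : ℕ) (ha : a ∈ A) (k : ℕ) (hk : 1 ≤ k) :
    ((A.powersetCard k).filter (fun S => a ∈ S)).card =
      (A.card - 1).choose (k - 1) := by
  rw [← Finset.card_erase_of_mem ha, ← Finset.card_powersetCard (k - 1) (A.erase a)]
  apply Finset.card_nbij' (fun S => S.erase a) (fun T => insert a T)
  · intro S hS
    simp only [Finset.mem_coe, Finset.mem_filter, Finset.mem_powersetCard] at hS ⊢
    exact ⟨Finset.erase_subset_erase a hS.1.1,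
      by rw [Finset.card_erase_of_mem hS.2, hS.1.2]⟩
  · intro T hT
    rw [Finset.mem_coe, Finset.mem_powersetCard] at hT
    have haT : a ∉ T := fun h => (Finset.mem_erase.1 (hT.1 h)).1 rfl
    simp only [Finset.mem_coe, Finset.mem_filter, Finset.mem_powersetCard]
    refine ⟨⟨?_, ?_⟩, Finset.mem_insert_self a T⟩
    · intro x hx
      rcases Finset.mem_insert.1 hx with rfl | hx
      · exact ha
      · exact Finset.erase_subset a A (hT.1 hx)
    · rw [Finset.card_insert_of_notMem haT, hT.2]; omega
  · intro S hS
    simp only [Finset.mem_coe, Finset.mem_filter] at hS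
    exact Finset.insert_erase hS.2
  · intro T hT
    rw [Finset.mem_coe, Finset.mem_powersetCard] at hT
    have haT : a ∉ T := fun h => (Finset.mem_erase.1 (hT.1 h)).1 rfl
    exact Finset.erase_insert haT


open Finset in
/-- Number of `m`-subsets of `B ∪ C` (disjoint) meeting `B` in exactly `r` elements. -/
lemma CTC_count_inter (B C : Finset ℕ) (hd : Disjoint B C) (m r : ℕ) (hr : r ≤ m) :
    (((B ∪ C).powersetCard m).filter (fun S => (S ∩ B).card = r)).card =
      B.card.choose r * C.card.choose (m - r) := by
  rw [← Finset.card_powersetCard r B, ← Finset.card_powersetCard (m - r) C,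
    ← Finset.card_product]
  apply Finset.card_nbij' (fun S => (S ∩ B, S ∩ C)) (fun T => T.1 ∪ T.2)
  · intro S hS
    simp only [Finset.mem_coe, Finset.mem_filter, Finset.mem_powersetCard] at hS
    obtain ⟨⟨hsub, hcard⟩, hrB⟩ := hS
    have hSBC : (S ∩ B) ∪ (S ∩ C) = S := by
      rw [← Finset.inter_union_distrib_left]
      exact Finset.inter_eq_left.2 hsub
    have hdisj : Disjoint (S ∩ B) (S ∩ C) :=
      hd.mono Finset.inter_subset_right Finset.inter_subset_right
    have hC : (S ∩ C).card = m - r := by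
      have := Finset.card_union_of_disjoint hdisj
      rw [hSBC, hcard, hrB] at this
      omega
    simp only [Finset.mem_coe, Finset.mem_product, Finset.mem_powersetCard]
    exact ⟨⟨Finset.inter_subset_right, hrB⟩, ⟨Finset.inter_subset_right, hC⟩⟩
  · intro T hT
    simp only [Finset.mem_coe, Finset.mem_product, Finset.mem_powersetCard] at hT
    obtain ⟨⟨h1, h1c⟩, ⟨h2, h2c⟩⟩ := hT
    have hdisj : Disjoint T.1 T.2 := hd.mono h1 h2
    have e1 : T.1 ∩ B = T.1 := Finset.inter_eq_left.2 h1
    have e2 : T.2 ∩ B = ∅ :=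
      Finset.disjoint_iff_inter_eq_empty.1 (hd.symm.mono_left h2)
    simp only [Finset.mem_coe, Finset.mem_filter, Finset.mem_powersetCard]
    refine ⟨⟨Finset.union_subset_union h1 h2, ?_⟩, ?_⟩
    · rw [Finset.card_union_of_disjoint hdisj, h1c, h2c]; omega
    · rw [Finset.union_inter_distrib_right, e1, e2, Finset.union_empty, h1c]
  · intro S hS
    simp only [Finset.mem_coe, Finset.mem_filter, Finset.mem_powersetCard] at hS
    show S ∩ B ∪ S ∩ C = S
    rw [← Finset.inter_union_distrib_left]
    exact Finset.inter_eq_left.2 hS.1.1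
  · intro T hT
    simp only [Finset.mem_coe, Finset.mem_product, Finset.mem_powersetCard] at hT
    obtain ⟨⟨h1, _⟩, ⟨h2, _⟩⟩ := hT
    have e1 : T.1 ∩ B = T.1 := Finset.inter_eq_left.2 h1
    have e2 : T.2 ∩ B = ∅ :=
      Finset.disjoint_iff_inter_eq_empty.1 (hd.symm.mono_left h2)
    have e3 : T.2 ∩ C = T.2 := Finset.inter_eq_left.2 h2
    have e4 : T.1 ∩ C = ∅ :=
      Finset.disjoint_iff_inter_eq_empty.1 (hd.mono_left h1)
    ext x
    · simp only [Finset.union_inter_distrib_right, e1, e2, Finset.union_empty]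
    · simp only [Finset.union_inter_distrib_right, e3, e4, Finset.empty_union]

open Finset in
lemma CTC_sign_sum (B C : Finset ℕ) (hd : Disjoint B C) (m : ℕ) :
    ∑ S ∈ (B ∪ C).powersetCard m, (-1 : ℝ) ^ (S ∩ B).card =
      ∑ r ∈ Finset.range (m + 1),
        (-1 : ℝ) ^ r * B.card.choose r * C.card.choose (m - r) := by
  rw [← Finset.sum_fiberwise_of_maps_to (g := fun S => (S ∩ B).card)
      (t := Finset.range (m + 1))
      (fun S hS => by
        rw [Finset.mem_powersetCard] at hS
        show (S ∩ B).card ∈ Finset.range (m + 1)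
        rw [Finset.mem_range]
        have := Finset.card_le_card (Finset.inter_subset_left (s₂ := B) (s₁ := S))
        omega)]
  refine Finset.sum_congr rfl fun r hr => ?_
  rw [Finset.mem_range] at hr
  have : ∀ S ∈ ((B ∪ C).powersetCard m).filter (fun S => (S ∩ B).card = r),
      (-1 : ℝ) ^ (S ∩ B).card = (-1 : ℝ) ^ r := by
    intro S hS
    rw [(Finset.mem_filter.1 hS).2]
  rw [Finset.sum_congr rfl this, Finset.sum_const, CTC_count_inter B C hd m r (by omega)]
  ring

open Finset in
lemma CTC_cross (n k p q : ℕ) (hk : 4 ≤ k) (hkn : k ≤ n) (hp : 1 ≤ p) (hpq : p < q)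
    (hq : q ≤ n) :
    (∑ S ∈ (Finset.Icc 1 n).powersetCard k,
      (if p ∈ S ∧ q ∈ S then
        (-1 : ℝ) ^ ((S.filter (· < p)).card + (S.filter (· < q)).card) else 0)) =
    ∑ r ∈ Finset.range (k - 1), (-1 : ℝ) ^ (r + 1) *
      Nat.choose (n - q + p - 1) (k - 2 - r) * Nat.choose (q - p - 1) r := by
  set B := Finset.Ioo p q with hB
  set C := Finset.Icc 1 n \ Finset.Icc p q with hC
  have hd : Disjoint B C := by
    rw [Finset.disjoint_left]
    intro x hxB hxC
    rw [hB, Finset.mem_Ioo] at hxB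
    rw [hC, Finset.mem_sdiff, Finset.mem_Icc, Finset.mem_Icc] at hxC
    omega
  have hBC : B ∪ C = Finset.Icc 1 n \ {p, q} := by
    ext x
    simp only [hB, hC, Finset.mem_union, Finset.mem_Ioo, Finset.mem_sdiff, Finset.mem_Icc,
      Finset.mem_insert, Finset.mem_singleton]
    omega
  have hcardB : B.card = q - p - 1 := by rw [hB, Nat.card_Ioo]
  have hcardC : C.card = n - q + p - 1 := by
    rw [hC, Finset.card_sdiff_of_subset (by intro x; simp only [Finset.mem_Icc]; omega),
      Nat.card_Icc, Nat.card_Icc]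
    omega
  rw [← Finset.sum_filter]
  have key : ∀ S ∈ ((Finset.Icc 1 n).powersetCard k).filter (fun S => p ∈ S ∧ q ∈ S),
      (-1 : ℝ) ^ ((S.filter (· < p)).card + (S.filter (· < q)).card) =
        -(-1 : ℝ) ^ ((S ∩ B).card) := by
    intro S hS
    rw [Finset.mem_filter] at hS
    obtain ⟨hSmem, hpS, hqS⟩ := hS
    have h1 : S.filter (· < q) = S.filter (· < p) ∪ S.filter (fun j => p ≤ j ∧ j < q) := by
      ext x
      simp only [Finset.mem_union, Finset.mem_filter]
      by_cases hx : x ∈ S <;> simp [hx] <;> omega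
    have h2 : Disjoint (S.filter (· < p)) (S.filter (fun j => p ≤ j ∧ j < q)) := by
      rw [Finset.disjoint_left]
      intro x hx1 hx2
      rw [Finset.mem_filter] at hx1 hx2
      omega
    have h3 : S.filter (fun j => p ≤ j ∧ j < q) = insert p (S ∩ B) := by
      ext x
      simp only [Finset.mem_filter, Finset.mem_insert, Finset.mem_inter, hB, Finset.mem_Ioo]
      constructor
      · rintro ⟨hxS, hpx, hxq⟩
        rcases eq_or_lt_of_le hpx with rfl | h
        · exact Or.inl rfl
        · exact Or.inr ⟨hxS, h, hxq⟩
      · rintro (rfl | ⟨hxS, hh1, hh2⟩)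
        · exact ⟨hpS, le_refl _, hpq⟩
        · exact ⟨hxS, le_of_lt hh1, hh2⟩
    have h4 : p ∉ S ∩ B := by
      simp [hB, Finset.mem_Ioo]
    have hcq : (S.filter (· < q)).card =
        (S.filter (· < p)).card + ((S ∩ B).card + 1) := by
      rw [h1, Finset.card_union_of_disjoint h2, h3, Finset.card_insert_of_notMem h4]
    rw [hcq, show (S.filter (· < p)).card + ((S.filter (· < p)).card + ((S ∩ B).card + 1))
      = 2 * (S.filter (· < p)).card + ((S ∩ B).card + 1) by ring,
      pow_add, pow_mul, neg_one_sq, one_pow, one_mul, pow_succ, mul_neg_one]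
  rw [Finset.sum_congr rfl key]
  have hbij : ∑ S ∈ ((Finset.Icc 1 n).powersetCard k).filter (fun S => p ∈ S ∧ q ∈ S),
      -(-1 : ℝ) ^ ((S ∩ B).card) =
      ∑ T ∈ (B ∪ C).powersetCard (k - 2), -(-1 : ℝ) ^ ((T ∩ B).card) := by
    apply Finset.sum_nbij' (fun S => S \ {p, q}) (fun T => T ∪ {p, q})
    · intro S hS
      simp only [Finset.mem_filter, Finset.mem_powersetCard] at hS
      obtain ⟨⟨hsub, hcard⟩, hpS, hqS⟩ := hS
      rw [Finset.mem_powersetCard, hBC]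
      constructor
      · exact Finset.sdiff_subset_sdiff hsub (le_refl _)
      · rw [Finset.card_sdiff_of_subset (by
          intro x hx
          simp only [Finset.mem_insert, Finset.mem_singleton] at hx
          rcases hx with rfl | rfl
          · exact hpS
          · exact hqS), hcard]
        congr 1
        rw [Finset.card_insert_of_notMem (by simp [hpq.ne]), Finset.card_singleton]
    · intro T hT
      rw [Finset.mem_powersetCard, hBC] at hT
      obtain ⟨hsub, hcard⟩ := hT
      have hpqT : Disjoint T ({p, q} : Finset ℕ) := by
        rw [Finset.disjoint_right]
        intro x hx hxT
        exact (Finset.mem_sdiff.1 (hsub hxT)).2 hx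
      simp only [Finset.mem_filter, Finset.mem_powersetCard]
      refine ⟨⟨?_, ?_⟩, ?_, ?_⟩
      · intro x hx
        rcases Finset.mem_union.1 hx with hx | hx
        · exact (Finset.mem_sdiff.1 (hsub hx)).1
        · simp only [Finset.mem_insert, Finset.mem_singleton] at hx
          rcases hx with rfl | rfl <;> rw [Finset.mem_Icc] <;> omega
      · rw [Finset.card_union_of_disjoint hpqT, hcard,
          Finset.card_insert_of_notMem (by simp [hpq.ne]), Finset.card_singleton]
        omega
      · exact Finset.mem_union_right _ (by simp)
      · exact Finset.mem_union_right _ (by simp)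
    · intro S hS
      simp only [Finset.mem_filter] at hS
      apply Finset.sdiff_union_of_subset
      intro x hx
      simp only [Finset.mem_insert, Finset.mem_singleton] at hx
      rcases hx with rfl | rfl
      · exact hS.2.1
      · exact hS.2.2
    · intro T hT
      rw [Finset.mem_powersetCard, hBC] at hT
      ext x
      simp only [Finset.mem_sdiff, Finset.mem_union, Finset.mem_insert, Finset.mem_singleton]
      constructor
      · rintro ⟨hx | hx, hnot⟩
        · exact hx
        · exact absurd hx hnot
      · intro hx
        have := (Finset.mem_sdiff.1 (hT.1 hx)).2
        simp only [Finset.mem_insert, Finset.mem_singleton] at this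
        exact ⟨Or.inl hx, this⟩
    · intro S hS
      have : (S \ {p, q}) ∩ B = S ∩ B := by
        ext x
        simp only [Finset.mem_inter, Finset.mem_sdiff, Finset.mem_insert, Finset.mem_singleton,
          hB, Finset.mem_Ioo]
        constructor
        · rintro ⟨⟨hxS, _⟩, hxB⟩
          exact ⟨hxS, hxB⟩
        · rintro ⟨hxS, hxB⟩
          exact ⟨⟨hxS, by omega⟩, hxB⟩
      rw [this]
  rw [hbij, Finset.sum_neg_distrib, CTC_sign_sum B C hd (k - 2), hcardB, hcardC,
    show k - 2 + 1 = k - 1 by omega, ← Finset.sum_neg_distrib]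
  refine Finset.sum_congr rfl fun r hr => ?_
  rw [pow_succ]
  ring

theorem cross_term_coefficient {V : Type*} [NormedAddCommGroup V] [InnerProductSpace ℝ V]
    (n k p q : ℕ) (hk : 4 ≤ k) (hkn : k ≤ n) (hp : 1 ≤ p) (hpq : p < q) (hq : q ≤ n)
    (u v : V) :
    (∑ S ∈ (Finset.Icc 1 n).powersetCard k,
        ‖∑ i ∈ S, ((-1 : ℝ) ^ (S.filter (· < i)).card) •
            (if i = p then u else if i = q then v else 0)‖ ^ 2) =
      (Nat.choose (n - 1) (k - 1) : ℝ) * (‖u‖ ^ 2 + ‖v‖ ^ 2) +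
        2 * (∑ r ∈ Finset.range (k - 1), (-1 : ℝ) ^ (r + 1) *
              Nat.choose (n - q + p - 1) (k - 2 - r) * Nat.choose (q - p - 1) r) *
          ⟪u, v⟫ := by
  have hpq' : p ≠ q := hpq.ne
  have expand : ∀ S ∈ (Finset.Icc 1 n).powersetCard k,
      ‖∑ i ∈ S, ((-1 : ℝ) ^ (S.filter (· < i)).card) •
          (if i = p then u else if i = q then v else 0)‖ ^ 2 =
      (if p ∈ S then ‖u‖ ^ 2 else 0) + (if q ∈ S then ‖v‖ ^ 2 else 0) +
        2 * ((if p ∈ S ∧ q ∈ S then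
          (-1 : ℝ) ^ ((S.filter (· < p)).card + (S.filter (· < q)).card) else 0) * ⟪u, v⟫) := by
    intro S _
    have hsum : (∑ i ∈ S, ((-1 : ℝ) ^ (S.filter (· < i)).card) •
          (if i = p then u else if i = q then v else 0)) =
        (if p ∈ S then ((-1 : ℝ) ^ (S.filter (· < p)).card) • u else 0) +
        (if q ∈ S then ((-1 : ℝ) ^ (S.filter (· < q)).card) • v else 0) := by
      have : ∀ i ∈ S, ((-1 : ℝ) ^ (S.filter (· < i)).card) •
            (if i = p then u else if i = q then v else 0) =
          (if i = p then ((-1 : ℝ) ^ (S.filter (· < i)).card) • u else 0) +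
          (if i = q then ((-1 : ℝ) ^ (S.filter (· < i)).card) • v else 0) := by
        intro i _
        by_cases h1 : i = p
        · subst h1
          simp [hpq']
        · by_cases h2 : i = q
          · subst h2
            simp [h1, Ne.symm hpq']
          · simp [h1, h2]
      rw [Finset.sum_congr rfl this, Finset.sum_add_distrib,
        Finset.sum_ite_eq' S p (fun i => ((-1 : ℝ) ^ (S.filter (· < i)).card) • u),
        Finset.sum_ite_eq' S q (fun i => ((-1 : ℝ) ^ (S.filter (· < i)).card) • v)]
    have e1 : ‖if p ∈ S then ((-1 : ℝ) ^ (S.filter (· < p)).card) • u else 0‖ ^ 2 =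
        (if p ∈ S then ‖u‖ ^ 2 else 0) := by
      split_ifs with h
      · rw [norm_smul]; simp
      · simp
    have e2 : ‖if q ∈ S then ((-1 : ℝ) ^ (S.filter (· < q)).card) • v else 0‖ ^ 2 =
        (if q ∈ S then ‖v‖ ^ 2 else 0) := by
      split_ifs with h
      · rw [norm_smul]; simp
      · simp
    have e3 : ⟪(if p ∈ S then ((-1 : ℝ) ^ (S.filter (· < p)).card) • u else 0),
        (if q ∈ S then ((-1 : ℝ) ^ (S.filter (· < q)).card) • v else 0)⟫ =
        (if p ∈ S ∧ q ∈ S then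
          (-1 : ℝ) ^ ((S.filter (· < p)).card + (S.filter (· < q)).card) else 0) * ⟪u, v⟫ := by
      by_cases h1 : p ∈ S
      · by_cases h2 : q ∈ S
        · simp only [h1, h2, and_self, if_true]
          rw [real_inner_smul_left, real_inner_smul_right, pow_add]
          ring
        · simp [h1, h2, inner_zero_right]
      · simp [h1, inner_zero_left]
    rw [hsum, norm_add_sq_real, e1, e2, e3]
    ring
  rw [Finset.sum_congr rfl expand, Finset.sum_add_distrib, Finset.sum_add_distrib,
    ← Finset.sum_filter, ← Finset.sum_filter, Finset.sum_const, Finset.sum_const,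
    ← Finset.mul_sum, ← Finset.sum_mul]
  have hpmem : p ∈ Finset.Icc 1 n := Finset.mem_Icc.2 ⟨hp, le_trans hpq.le hq⟩
  have hqmem : q ∈ Finset.Icc 1 n := Finset.mem_Icc.2 ⟨le_trans hp hpq.le, hq⟩
  have hA : (Finset.Icc 1 n).card = n := by rw [Nat.card_Icc]; omega
  rw [CTC_count_contains _ p hpmem k (by omega), CTC_count_contains _ q hqmem k (by omega),
    hA, CTC_cross n k p q hk hkn hp hpq hq]
  simp only [nsmul_eq_mul]
  ring
end

section
/- Let n ≥ 4, k = 4, and define c_{1j} = ∑_{r=0}^{2} (−1)^{r+1} C(n−j, 2−r)·C(j−2, r) for 3 ≤ j ≤ n−1. Then ∑_{j=3}^{n−1} c_{1j} + C(n−1, 3) = 2·C(n−2, 2). -/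
/-!
Writing `a = n - j` and `b = j - 2`, so that `a + b = n - 2`, Vandermonde's
`C(a + b, 2) = C(a, 2) + a b + C(b, 2)` turns the coefficient `c_{1j} = -C(a, 2) + a b - C(b, 2)`
into `2 a b - C(n - 2, 2)`. Summing over the `n - 3` splittings with `a, b ≥ 1` gives
`∑ a b = C(n - 1, 3)`, and `3 C(n - 1, 3) = (n - 1) C(n - 2, 2)` finishes the computation.
-/

open Finset

theorem Nat.add_choose_two (a b : ℕ) :
    (a + b).choose 2 = a.choose 2 + a * b + b.choose 2 := by
  rw [Nat.add_choose_eq, Nat.sum_antidiagonal_eq_sum_range_succ (fun i j => a.choose i * b.choose j)]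
  simp only [sum_range_succ, range_one, sum_singleton, choose_zero_right, choose_one_right,
    tsub_zero, Nat.add_one_sub_one, tsub_self, one_mul, mul_one]
  ring

theorem sum_range_three_neg_one_pow_mul_choose_mul_choose (a b : ℕ) :
    ∑ r ∈ range 3, (-1 : ℤ) ^ (r + 1) * a.choose (2 - r) * b.choose r =
      2 * a * b - (a + b).choose 2 := by
  simp only [sum_range_succ, range_one, sum_singleton, Nat.add_choose_two, Nat.choose_zero_right,
    Nat.choose_one_right, tsub_zero, Nat.add_one_sub_one, tsub_self]
  push_cast
  ring

theorem Finset.Nat.sum_antidiagonal_succ_mul_succ (m : ℕ) :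
    ∑ p ∈ antidiagonal m, (p.1 + 1) * (p.2 + 1) = (m + 3).choose 3 := by
  induction m with
  | zero => rfl
  | succ m ih =>
    have hsnd : ∑ p ∈ antidiagonal m, (p.2 + 1) = (m + 2).choose 2 := by
      rw [← Nat.sum_antidiagonal_swap, Nat.sum_antidiagonal_eq_sum_range_succ_mk]
      simp only [Prod.swap]
      rw [Nat.choose_two_right, ← sum_range_id, sum_range_succ' _ (m + 1), add_zero]
    have hshift : ∑ p ∈ antidiagonal m, (p.1 + 1 + 1) * (p.2 + 1) =
        (m + 3).choose 3 + (m + 2).choose 2 := by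
      rw [← ih, ← hsnd, ← sum_add_distrib]
      exact sum_congr rfl fun p _ => by ring
    rw [Nat.sum_antidiagonal_succ, hshift, Nat.choose_succ_succ (m + 3) 2,
      Nat.choose_succ_succ (m + 2) 1, Nat.choose_one_right]
    ring

theorem Finset.Nat.sum_Icc_sub_eq_sum_antidiagonal {M : Type*} [AddCommMonoid M]
    (f : ℕ → ℕ → M) (m a : ℕ) :
    ∑ j ∈ Icc a (m + a), f (m + a - j) (j - a) = ∑ p ∈ antidiagonal m, f p.1 p.2 := by
  refine sum_nbij' (fun j => (m + a - j, j - a)) (fun p => p.2 + a) ?_ ?_ ?_ ?_ fun _ _ => rfl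
  all_goals
    intro x hx
    simp only [mem_Icc, HasAntidiagonal.mem_antidiagonal] at hx ⊢
  · omega
  · omega
  · omega
  · ext <;> simp only <;> omega

theorem coefficient_sum_k4 (n : ℕ) (hn : 4 ≤ n) :
    (∑ j ∈ Finset.Icc 3 (n - 1),
        ∑ r ∈ Finset.range 3, (-1 : ℤ) ^ (r + 1) *
          Nat.choose (n - j) (2 - r) * Nat.choose (j - 2) r) +
      (Nat.choose (n - 1) 3 : ℤ) = 2 * Nat.choose (n - 2) 2 := by
  obtain ⟨m, rfl⟩ : ∃ m, n = m + 4 := ⟨n - 4, by omega⟩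
  rw [show m + 4 - 1 = m + 3 by omega, show m + 4 - 2 = m + 2 by omega]
  have hsum : ∑ j ∈ Icc 3 (m + 3),
      ∑ r ∈ range 3, (-1 : ℤ) ^ (r + 1) * (m + 4 - j).choose (2 - r) * (j - 2).choose r =
        ∑ p ∈ antidiagonal m, (2 * ((p.1 + 1) * (p.2 + 1) : ℕ) - (m + 2).choose 2 : ℤ) := by
    rw [← Nat.sum_Icc_sub_eq_sum_antidiagonal
      (fun a b => (2 * ((a + 1) * (b + 1) : ℕ) - (m + 2).choose 2 : ℤ)) m 3]
    refine sum_congr rfl fun j hj => ?_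
    obtain ⟨hj3, hjm⟩ := mem_Icc.mp hj
    rw [sum_range_three_neg_one_pow_mul_choose_mul_choose,
      show m + 4 - j = m + 3 - j + 1 by omega, show j - 2 = j - 3 + 1 by omega,
      show m + 3 - j + 1 + (j - 3 + 1) = m + 2 by omega]
    push_cast
    ring
  have hchoose : ((m + 3) * (m + 2).choose 2 : ℤ) = (m + 3).choose 3 * 3 :=
    mod_cast Nat.add_one_mul_choose_eq (m + 2) 2
  rw [hsum, sum_sub_distrib, ← mul_sum, ← Nat.cast_sum, Nat.sum_antidiagonal_succ_mul_succ,
    sum_const, Nat.card_antidiagonal, nsmul_eq_mul]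
  push_cast
  linear_combination -hchoose
end

section
/- Let n ≥ 4 and let x₁, …, xₙ be vectors in a real or complex inner product space, with x_{n+1} = x₁. Define c_{ij} = ∑_{r=0}^{2} (−1)^{r+1} C(n−j+i−1, 2−r)·C(j−i−1, r) for 1 < j − i < n − 1. Then C(n−2, 2) · ∑_{i=1}^{n} ‖x_i − x_{i+1}‖² = ∑_{1≤i<j≤n, 1<j−i<n−1} c_{ij} ‖x_i − x_j‖² + ∑_{1≤i<j<k<l≤n} ‖x_i − x_j + x_k − x_l‖² (generalized Euler identity). -/
/-!
Write `q a b = ‖x a - x b‖ ^ 2`. Polarization turns `‖x i - x j + x k - x l‖ ^ 2` into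
`q i j + q k l + q i l + q j k - q i k - q j l`, so the identity is linear in `q` and holds for an
arbitrary function of pairs. Summed over `i < j < k < l`, a pair `a < b` with `p = a - 1` points
before it, `m = b - a - 1` between its ends and `s = n - b` after it receives the weight
`C(p,2) + C(m,2) + C(s,2) + p s - m s - p m = C(p+s,2) - (p+s) m + C(m,2)`, which is exactly
`-c_ab`. Hence every pair with `1 < b - a < n - 1` cancels, and the remaining pairs are the edges of
the cycle: `b = a + 1` (where `m = 0`) and `(1, n)` (where `p = s = 0`), each of weight `C(n-2,2)`.
-/

open Finset

theorem norm_sub_add_sub_sq {V : Type*} [NormedAddCommGroup V] [InnerProductSpace ℝ V]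
    (a b c d : V) :
    ‖a - b + c - d‖ ^ 2 = ‖a - b‖ ^ 2 + ‖c - d‖ ^ 2 + ‖a - d‖ ^ 2 + ‖b - c‖ ^ 2
      - ‖a - c‖ ^ 2 - ‖b - d‖ ^ 2 := by
  simp only [norm_sub_sq_real, norm_add_sq_real, inner_add_left, inner_sub_left]
  linarith [real_inner_comm a b, real_inner_comm a c, real_inner_comm a d,
    real_inner_comm b c, real_inner_comm b d, real_inner_comm c d]

theorem sum_Ico_sub_sub_one (a b : ℕ) : ∑ i ∈ Ico a b, (b - i - 1) = (b - a).choose 2 := by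
  rw [sum_Ico_eq_sum_range, Nat.choose_two_right, ← sum_range_id, ← sum_range_reflect]
  refine sum_congr rfl fun k hk => ?_
  rw [mem_range] at hk
  omega

theorem sum_Ioc_sub (a b : ℕ) : ∑ i ∈ Ioc a b, (b - i) = (b - a).choose 2 := by
  rw [← Ico_add_one_add_one_eq_Ioc, ← Nat.add_sub_add_right b 1 a, ← sum_Ico_sub_sub_one]
  exact sum_congr rfl fun i _ => by omega

section Reindexing

variable {M : Type*} [AddCommMonoid M]

theorem sum_Icc_one_ite_lt (n i : ℕ) (f : ℕ → M) :
    ∑ j ∈ Icc 1 n, (if i < j then f j else 0) = ∑ j ∈ Ioc i n, f j := by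
  rw [← sum_filter]
  congr 1
  ext j
  simp only [mem_filter, mem_Icc, mem_Ioc]
  omega

theorem sum_Ioc_sum_Ioc_comm (i n : ℕ) (f : ℕ → ℕ → M) :
    ∑ j ∈ Ioc i n, ∑ k ∈ Ioc j n, f j k = ∑ k ∈ Ioc i n, ∑ j ∈ Ioo i k, f j k :=
  sum_comm' fun j k => by simp only [mem_Ioc, mem_Ioo]; omega

theorem sum_Icc_one_sum_Ioc_comm (n : ℕ) (f : ℕ → ℕ → M) :
    ∑ i ∈ Icc 1 n, ∑ j ∈ Ioc i n, f i j = ∑ j ∈ Icc 1 n, ∑ i ∈ Ico 1 j, f i j :=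
  sum_comm' fun i j => by simp only [mem_Icc, mem_Ioc, mem_Ico]; omega

theorem sum_increasing_quadruples (n : ℕ) (F : ℕ → ℕ → ℕ → ℕ → M) :
    ∑ i ∈ Icc 1 n, ∑ j ∈ Icc 1 n, ∑ k ∈ Icc 1 n, ∑ l ∈ Icc 1 n,
        (if i < j ∧ j < k ∧ k < l then F i j k l else 0) =
      ∑ i ∈ Icc 1 n, ∑ j ∈ Ioc i n, ∑ k ∈ Ioc j n, ∑ l ∈ Ioc k n, F i j k l := by
  simp only [ite_and, sum_ite_irrel, sum_const_zero, sum_Icc_one_ite_lt]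

end Reindexing

section QuadrupleCounts

variable {R : Type*} [Semiring R] (n : ℕ) (q : ℕ → ℕ → R)

theorem sum_quadruples_pair₁₂ :
    ∑ i ∈ Icc 1 n, ∑ j ∈ Ioc i n, ∑ k ∈ Ioc j n, ∑ _ ∈ Ioc k n, q i j =
      ∑ a ∈ Icc 1 n, ∑ b ∈ Ioc a n, ((n - b).choose 2 : ℕ) * q a b := by
  refine sum_congr rfl fun a _ => sum_congr rfl fun b _ => ?_
  simp only [sum_const, Nat.card_Ioc, nsmul_eq_mul, ← sum_mul, ← Nat.cast_sum]
  rw [sum_Ioc_sub]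

theorem sum_quadruples_pair₃₄ :
    ∑ i ∈ Icc 1 n, ∑ j ∈ Ioc i n, ∑ k ∈ Ioc j n, ∑ l ∈ Ioc k n, q k l =
      ∑ a ∈ Icc 1 n, ∑ b ∈ Ioc a n, ((a - 1).choose 2 : ℕ) * q a b := by
  rw [sum_congr rfl fun i _ => sum_Ioc_sum_Ioc_comm i n fun _ k => ∑ l ∈ Ioc k n, q k l,
    sum_Icc_one_sum_Ioc_comm n fun i k => ∑ j ∈ Ioo i k, ∑ l ∈ Ioc k n, q k l]
  refine sum_congr rfl fun a _ => ?_
  simp only [sum_const, Nat.card_Ioo, nsmul_eq_mul, ← sum_mul, ← Nat.cast_sum, ← mul_sum]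
  rw [sum_Ico_sub_sub_one]

theorem sum_quadruples_pair₁₄ :
    ∑ i ∈ Icc 1 n, ∑ j ∈ Ioc i n, ∑ k ∈ Ioc j n, ∑ l ∈ Ioc k n, q i l =
      ∑ a ∈ Icc 1 n, ∑ b ∈ Ioc a n, ((b - a - 1).choose 2 : ℕ) * q a b := by
  refine sum_congr rfl fun a _ => ?_
  rw [sum_congr rfl fun j _ => sum_Ioc_sum_Ioc_comm j n fun _ _ => q a _,
    sum_Ioc_sum_Ioc_comm a n fun j l => ∑ k ∈ Ioo j l, q a l]
  refine sum_congr rfl fun b _ => ?_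
  simp only [sum_const, Nat.card_Ioo, nsmul_eq_mul, ← sum_mul, ← Nat.cast_sum]
  rw [← Ico_add_one_left_eq_Ioo, sum_Ico_sub_sub_one, Nat.sub_sub]

theorem sum_quadruples_pair₂₃ :
    ∑ i ∈ Icc 1 n, ∑ j ∈ Ioc i n, ∑ k ∈ Ioc j n, ∑ _ ∈ Ioc k n, q j k =
      ∑ a ∈ Icc 1 n, ∑ b ∈ Ioc a n, ((a - 1 : ℕ) : R) * (n - b : ℕ) * q a b := by
  rw [sum_Icc_one_sum_Ioc_comm n fun _ j => ∑ k ∈ Ioc j n, ∑ _ ∈ Ioc k n, q j k]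
  refine sum_congr rfl fun a _ => ?_
  simp only [sum_const, Nat.card_Ioc, Nat.card_Ico, nsmul_eq_mul, mul_sum, mul_assoc]

theorem sum_quadruples_pair₁₃ :
    ∑ i ∈ Icc 1 n, ∑ j ∈ Ioc i n, ∑ k ∈ Ioc j n, ∑ _ ∈ Ioc k n, q i k =
      ∑ a ∈ Icc 1 n, ∑ b ∈ Ioc a n, ((b - a - 1 : ℕ) : R) * (n - b : ℕ) * q a b := by
  refine sum_congr rfl fun a _ => ?_
  rw [sum_Ioc_sum_Ioc_comm a n fun _ k => ∑ _ ∈ Ioc k n, q a k]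
  simp only [sum_const, Nat.card_Ioc, Nat.card_Ioo, nsmul_eq_mul, mul_assoc]

theorem sum_quadruples_pair₂₄ :
    ∑ i ∈ Icc 1 n, ∑ j ∈ Ioc i n, ∑ k ∈ Ioc j n, ∑ l ∈ Ioc k n, q j l =
      ∑ a ∈ Icc 1 n, ∑ b ∈ Ioc a n, ((a - 1 : ℕ) : R) * (b - a - 1 : ℕ) * q a b := by
  rw [sum_Icc_one_sum_Ioc_comm n fun _ j => ∑ k ∈ Ioc j n, ∑ l ∈ Ioc k n, q j l]
  refine sum_congr rfl fun a _ => ?_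
  rw [sum_Ioc_sum_Ioc_comm a n fun _ _ => q a _]
  simp only [sum_const, Nat.card_Ioo, Nat.card_Ico, nsmul_eq_mul, mul_sum, mul_assoc]

end QuadrupleCounts

/-- The coefficient of `t ^ 2` in `(1 + t) ^ N * (1 - t) ^ m`; in the notation of the statement,
`c_ij = -pairWeight (n - j + i - 1) (j - i - 1)`. -/
def pairWeight (N m : ℕ) : ℝ := N.choose 2 - N * m + m.choose 2

theorem pairWeight_add (p m s : ℕ) :
    pairWeight (p + s) m =
      (p.choose 2 : ℝ) + m.choose 2 + s.choose 2 + p * s - m * s - p * m := by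
  simp only [pairWeight, Nat.cast_choose_two]
  push_cast
  ring

theorem sum_range_three_neg_one_pow_mul_choose (N m : ℕ) :
    ∑ r ∈ range 3, (-1 : ℝ) ^ (r + 1) * N.choose (2 - r) * m.choose r = -pairWeight N m := by
  rw [sum_range_succ, sum_range_succ, sum_range_one, pairWeight]
  norm_num
  ring

theorem pairWeight_of_not_interior {n a b : ℕ} (ha : 1 ≤ a) (hab : a < b) (hb : b ≤ n)
    (h : ¬(1 < b - a ∧ b - a < n - 1)) :
    pairWeight (n - b + a - 1) (b - a - 1) = (n - 2).choose 2 := by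
  rcases (by omega : b = a + 1 ∨ (a = 1 ∧ b = n)) with rfl | ⟨rfl, rfl⟩
  · simp [pairWeight, show n - (a + 1) + a - 1 = n - 2 by omega]
  · simp [pairWeight, show b - 1 - 1 = b - 2 by omega]

theorem sum_quadruples_eq_sum_pairWeight (n : ℕ) (q : ℕ → ℕ → ℝ) :
    ∑ i ∈ Icc 1 n, ∑ j ∈ Ioc i n, ∑ k ∈ Ioc j n, ∑ l ∈ Ioc k n,
        (q i j + q k l + q i l + q j k - q i k - q j l) =
      ∑ a ∈ Icc 1 n, ∑ b ∈ Ioc a n, pairWeight (n - b + a - 1) (b - a - 1) * q a b := by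
  simp only [sum_add_distrib, sum_sub_distrib]
  rw [sum_quadruples_pair₁₂, sum_quadruples_pair₃₄, sum_quadruples_pair₁₄,
    sum_quadruples_pair₂₃, sum_quadruples_pair₁₃, sum_quadruples_pair₂₄]
  simp only [← sum_add_distrib, ← sum_sub_distrib]
  refine sum_congr rfl fun a ha => sum_congr rfl fun b hb => ?_
  rw [mem_Icc] at ha
  rw [mem_Ioc] at hb
  rw [show n - b + a - 1 = (a - 1) + (n - b) by omega, pairWeight_add]
  ring

theorem sum_cycle_edges (n : ℕ) (hn : 3 ≤ n) (q : ℕ → ℕ → ℝ) :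
    ∑ a ∈ Icc 1 n, ∑ b ∈ Ioc a n, (if b = a + 1 ∨ (a = 1 ∧ b = n) then q a b else 0) =
      ∑ i ∈ Ico 1 n, q i (i + 1) + q 1 n := by
  have hsplit : ∀ a ∈ Icc 1 n, ∀ b ∈ Ioc a n,
      (if b = a + 1 ∨ (a = 1 ∧ b = n) then q a b else 0) =
        (if b = a + 1 then q a b else 0) + if a = 1 ∧ b = n then q a b else 0 := by
    intro a ha b hb
    rw [mem_Icc] at ha
    rw [mem_Ioc] at hb
    split_ifs <;> first | omega | ring
  rw [sum_congr rfl fun a ha => sum_congr rfl (hsplit a ha)]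
  simp only [sum_add_distrib, ite_and, sum_ite_eq', sum_ite_irrel, sum_const_zero, mem_Ioc,
    lt_add_one, if_true, le_refl, show 1 < n by omega, mem_Icc, show 1 ≤ n by omega, and_self,
    ← sum_filter]
  congr 2
  ext i
  simp only [mem_filter, mem_Icc, mem_Ico]
  omega

theorem generalized_euler_identity_of_fun (n : ℕ) (hn : 3 ≤ n) (q : ℕ → ℕ → ℝ) :
    ((n - 2).choose 2 : ℝ) * (∑ i ∈ Ico 1 n, q i (i + 1) + q 1 n) =
      (∑ i ∈ Icc 1 n, ∑ j ∈ Icc 1 n,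
        if i < j ∧ 1 < j - i ∧ j - i < n - 1 then
          (∑ r ∈ range 3, (-1 : ℝ) ^ (r + 1) *
              (n - j + i - 1).choose (2 - r) * (j - i - 1).choose r) * q i j else 0) +
      ∑ i ∈ Icc 1 n, ∑ j ∈ Icc 1 n, ∑ k ∈ Icc 1 n, ∑ l ∈ Icc 1 n,
        if i < j ∧ j < k ∧ k < l then q i j + q k l + q i l + q j k - q i k - q j l else 0 := by
  rw [sum_increasing_quadruples, sum_quadruples_eq_sum_pairWeight, ← sum_cycle_edges n hn q]
  simp only [sum_range_three_neg_one_pow_mul_choose, ite_and, sum_Icc_one_ite_lt, mul_sum,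
    ← sum_add_distrib]
  refine sum_congr rfl fun a ha => sum_congr rfl fun b hb => ?_
  rw [mem_Icc] at ha
  rw [mem_Ioc] at hb
  rw [← ite_and]
  by_cases hmid : 1 < b - a ∧ b - a < n - 1
  · rw [if_neg (by omega), if_pos hmid]
    ring
  · rw [if_pos (by omega), if_neg hmid, pairWeight_of_not_interior ha.1 hb.1 hb.2 hmid]
    ring

theorem generalized_euler_identity {𝕜 V : Type*} [RCLike 𝕜] [NormedAddCommGroup V]
    [InnerProductSpace 𝕜 V] (n : ℕ) (hn : 4 ≤ n) (x : ℕ → V) (hcyc : x (n + 1) = x 1) :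
    (Nat.choose (n - 2) 2 : ℝ) * ∑ i ∈ Finset.Icc 1 n, ‖x i - x (i + 1)‖ ^ 2 =
      (∑ i ∈ Finset.Icc 1 n, ∑ j ∈ Finset.Icc 1 n,
        if i < j ∧ 1 < j - i ∧ j - i < n - 1 then
          (∑ r ∈ Finset.range 3, (-1 : ℝ) ^ (r + 1) *
              Nat.choose (n - j + i - 1) (2 - r) * Nat.choose (j - i - 1) r) *
            ‖x i - x j‖ ^ 2 else 0) +
      ∑ i ∈ Finset.Icc 1 n, ∑ j ∈ Finset.Icc 1 n, ∑ k ∈ Finset.Icc 1 n,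
        ∑ l ∈ Finset.Icc 1 n,
          if i < j ∧ j < k ∧ k < l then ‖x i - x j + x k - x l‖ ^ 2 else 0 := by
  let _ : InnerProductSpace ℝ V := InnerProductSpace.rclikeToReal 𝕜 V
  have hcycle : ∑ i ∈ Icc 1 n, ‖x i - x (i + 1)‖ ^ 2 =
      ∑ i ∈ Ico 1 n, ‖x i - x (i + 1)‖ ^ 2 + ‖x 1 - x n‖ ^ 2 := by
    rw [← Ico_add_one_right_eq_Icc, sum_Ico_succ_top (by omega), hcyc, norm_sub_rev]
  simp only [hcycle, norm_sub_add_sub_sq]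
  exact generalized_euler_identity_of_fun n (by omega) fun a b => ‖x a - x b‖ ^ 2
end

section
/- Let n ≥ 4 and let A₁, …, Aₙ be points in ℝ^m, with A_{n+1} = A₁. For i < j let M_{ij} denote the midpoint of segment A_iA_j, and let c_{ij} = ∑_{r=0}^{2} (−1)^{r+1} C(n−j+i−1, 2−r)·C(j−i−1, r). Then C(n−2, 2) ∑_{i=1}^{n} |A_i A_{i+1}|² = ∑_{1≤i<j≤n, 1<j−i<n−1} c_{ij} |A_i A_j|² + 4 ∑_{1≤i<j<k<l≤n} |M_{ik} M_{jl}|². -/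
/-!
Euler's four-point identity `4 |M_ac M_bd|² = |ab|² + |bc|² + |cd|² + |ad|² - |ac|² - |bd|²`
(two applications of Apollonius's theorem) turns the midpoint sum into a combination of the
`|A_p A_q|²`. Counting the quadruples `i < j < k < l` in which `(p, q)` occupies each of the six
pairs of positions, the coefficient of `|A_p A_q|²` is `C(s, 2) - s t + C(t, 2)`, where `t` indices
lie strictly between `p` and `q` and `s` outside; this is exactly `-c_pq`. For the `n` edges of the
cycle (`t = 0` or `s = 0`) it equals `C(n - 2, 2)`.
-/

open Finset

theorem four_mul_dist_midpoint_sq {V P : Type*} [NormedAddCommGroup V] [InnerProductSpace ℝ V]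
    [MetricSpace P] [NormedAddTorsor V P] (a b c d : P) :
    4 * dist (midpoint ℝ a c) (midpoint ℝ b d) ^ 2 =
      dist a b ^ 2 + dist b c ^ 2 + dist c d ^ 2 + dist a d ^ 2 - dist a c ^ 2 - dist b d ^ 2 := by
  have hM := EuclideanGeometry.dist_sq_add_dist_sq_eq_two_mul_dist_midpoint_sq_add_half_dist_sq
    (midpoint ℝ a c) b d
  have hb := EuclideanGeometry.dist_sq_add_dist_sq_eq_two_mul_dist_midpoint_sq_add_half_dist_sq b a c
  have hd := EuclideanGeometry.dist_sq_add_dist_sq_eq_two_mul_dist_midpoint_sq_add_half_dist_sq d a c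
  rw [dist_comm b a] at hb
  rw [dist_comm d c, dist_comm d a] at hd
  rw [dist_comm _ b, dist_comm _ d] at hM
  linear_combination -2 * hM - hb - hd

theorem sum_Icc_boole_lt_le {n a N : ℕ} (hN : a + N ≤ n) :
    ∑ x ∈ Icc 1 n, (if a < x ∧ x ≤ a + N then 1 else 0) = N := by
  rw [sum_boole, Nat.cast_id, show {x ∈ Icc 1 n | a < x ∧ x ≤ a + N} = Ioc a (a + N) by
    ext x; simp only [mem_filter, mem_Icc, mem_Ioc]; omega]
  simp

theorem sum_Icc_sum_Icc_boole_lt_lt_le {n a N : ℕ} (hN : a + N ≤ n) :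
    ∑ x ∈ Icc 1 n, ∑ y ∈ Icc 1 n, (if a < x ∧ x < y ∧ y ≤ a + N then 1 else 0) = N.choose 2 := by
  induction N with
  | zero => exact sum_eq_zero fun x _ => sum_eq_zero fun y _ => if_neg (by omega)
  | succ N ih =>
    have hsplit : ∀ x y, (if a < x ∧ x < y ∧ y ≤ a + (N + 1) then 1 else 0) =
        (if a < x ∧ x < y ∧ y ≤ a + N then 1 else 0) +
          if y = a + N + 1 then (if a < x ∧ x ≤ a + N then 1 else 0) else 0 := by
      intro x y; split_ifs <;> omega
    have hlast : a + N + 1 ∈ Icc 1 n := by simp only [mem_Icc]; omega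
    simp only [hsplit, sum_add_distrib, sum_ite_eq', hlast, if_true]
    rw [ih (by omega), sum_Icc_boole_lt_le (by omega), Nat.choose_succ_succ', Nat.choose_one_right,
      add_comm N]

section AddCommMonoid

variable {M : Type*} [AddCommMonoid M]

theorem sum_sum_ite_eq_choose_two_nsmul {n N : ℕ} {P : Prop} [Decidable P]
    {C : ℕ → ℕ → Prop} [∀ x y, Decidable (C x y)] (a : ℕ) (v : M) (hN : a + N ≤ n)
    (hC : ∀ x ∈ Icc 1 n, ∀ y ∈ Icc 1 n, C x y ↔ P ∧ a < x ∧ x < y ∧ y ≤ a + N) :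
    ∑ x ∈ Icc 1 n, ∑ y ∈ Icc 1 n, (if C x y then v else 0) = if P then N.choose 2 • v else 0 := by
  split_ifs with hP
  · rw [← sum_Icc_sum_Icc_boole_lt_lt_le hN, sum_smul]
    refine sum_congr rfl fun x hx => ?_
    rw [sum_smul]
    refine sum_congr rfl fun y hy => ?_
    rw [ite_smul, one_smul, zero_smul]
    exact if_congr (by simp only [hC x hx y hy, hP, true_and]) rfl rfl
  · exact sum_eq_zero fun x hx => sum_eq_zero fun y hy => if_neg (by simp [hC x hx y hy, hP])

theorem sum_sum_ite_eq_mul_nsmul {n N K : ℕ} {P : Prop} [Decidable P]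
    {C : ℕ → ℕ → Prop} [∀ x y, Decidable (C x y)] (a b : ℕ) (v : M) (hN : a + N ≤ n) (hK : b + K ≤ n)
    (hC : ∀ x ∈ Icc 1 n, ∀ y ∈ Icc 1 n,
      C x y ↔ P ∧ (a < x ∧ x ≤ a + N) ∧ (b < y ∧ y ≤ b + K)) :
    ∑ x ∈ Icc 1 n, ∑ y ∈ Icc 1 n, (if C x y then v else 0) = if P then (N * K) • v else 0 := by
  split_ifs with hP
  · rw [← sum_Icc_boole_lt_le hN, ← sum_Icc_boole_lt_le hK, sum_mul_sum, sum_smul]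
    refine sum_congr rfl fun x hx => ?_
    rw [sum_smul]
    refine sum_congr rfl fun y hy => ?_
    rw [ite_zero_mul_ite_zero, mul_one, ite_smul, one_smul, zero_smul]
    exact if_congr (by simp only [hC x hx y hy, hP, true_and]) rfl rfl
  · exact sum_eq_zero fun x hx => sum_eq_zero fun y hy => if_neg (by simp [hC x hx y hy, hP])

def increasingQuadSum (n : ℕ) (f : ℕ → ℕ → ℕ → ℕ → M) : M :=
  ∑ i ∈ Icc 1 n, ∑ j ∈ Icc 1 n, ∑ k ∈ Icc 1 n, ∑ l ∈ Icc 1 n,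
    if i < j ∧ j < k ∧ k < l then f i j k l else 0

def increasingPairSum (n : ℕ) (g : ℕ → ℕ → M) : M :=
  ∑ p ∈ Icc 1 n, ∑ q ∈ Icc 1 n, if p < q then g p q else 0

theorem increasingQuadSum_add (n : ℕ) (f g : ℕ → ℕ → ℕ → ℕ → M) :
    increasingQuadSum n (fun i j k l => f i j k l + g i j k l) =
      increasingQuadSum n f + increasingQuadSum n g := by
  simp only [increasingQuadSum, ite_add_zero, sum_add_distrib]

theorem increasingPairSum_add (n : ℕ) (g g' : ℕ → ℕ → M) :
    increasingPairSum n (fun p q => g p q + g' p q) =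
      increasingPairSum n g + increasingPairSum n g' := by
  simp only [increasingPairSum, ite_add_zero, sum_add_distrib]

theorem increasingPairSum_congr {n : ℕ} {g g' : ℕ → ℕ → M}
    (h : ∀ p q, 1 ≤ p → p < q → q ≤ n → g p q = g' p q) :
    increasingPairSum n g = increasingPairSum n g' :=
  sum_congr rfl fun p hp => sum_congr rfl fun q hq => if_ctx_congr Iff.rfl
    (fun hpq => h p q (mem_Icc.1 hp).1 hpq (mem_Icc.1 hq).2) fun _ => rfl

variable (n : ℕ) (e : ℕ → ℕ → M)

theorem increasingQuadSum_ij :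
    increasingQuadSum n (fun i j _ _ => e i j) =
      increasingPairSum n (fun p q => (n - q).choose 2 • e p q) :=
  sum_congr rfl fun p _ => sum_congr rfl fun q hq =>
    sum_sum_ite_eq_choose_two_nsmul q _ (by simp at hq; omega) (by intros; simp at *; omega)

theorem increasingQuadSum_kl :
    increasingQuadSum n (fun _ _ k l => e k l) =
      increasingPairSum n (fun p q => (p - 1).choose 2 • e p q) := by
  rw [increasingQuadSum, sum_comm_cycle, sum_congr rfl fun _ _ => sum_comm_cycle]
  exact sum_congr rfl fun p hp => sum_congr rfl fun q _ =>
    sum_sum_ite_eq_choose_two_nsmul 0 _ (by simp at hp; omega) (by intros; simp at *; omega)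

theorem increasingQuadSum_il :
    increasingQuadSum n (fun i _ _ l => e i l) =
      increasingPairSum n (fun p q => (q - p - 1).choose 2 • e p q) := by
  rw [increasingQuadSum, sum_congr rfl fun _ _ => sum_comm_cycle]
  exact sum_congr rfl fun p hp => sum_congr rfl fun q hq =>
    sum_sum_ite_eq_choose_two_nsmul p _ (by simp at hp hq; omega) (by intros; simp at *; omega)

theorem increasingQuadSum_ik :
    increasingQuadSum n (fun i _ k _ => e i k) =
      increasingPairSum n (fun p q => ((q - p - 1) * (n - q)) • e p q) := by
  rw [increasingQuadSum, sum_congr rfl fun _ _ => sum_comm]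
  exact sum_congr rfl fun p hp => sum_congr rfl fun q hq =>
    sum_sum_ite_eq_mul_nsmul p q _ (by simp at hp hq; omega) (by simp at hq; omega)
      (by intros; simp at *; omega)

theorem increasingQuadSum_jk :
    increasingQuadSum n (fun _ j k _ => e j k) =
      increasingPairSum n (fun p q => ((p - 1) * (n - q)) • e p q) := by
  rw [increasingQuadSum, sum_comm, sum_congr rfl fun _ _ => sum_comm]
  exact sum_congr rfl fun p hp => sum_congr rfl fun q hq =>
    sum_sum_ite_eq_mul_nsmul 0 q _ (by simp at hp; omega) (by simp at hq; omega)
      (by intros; simp at *; omega)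

theorem increasingQuadSum_jl :
    increasingQuadSum n (fun _ j _ l => e j l) =
      increasingPairSum n (fun p q => ((p - 1) * (q - p - 1)) • e p q) := by
  rw [increasingQuadSum, sum_comm, sum_congr rfl fun _ _ => sum_comm_cycle]
  exact sum_congr rfl fun p hp => sum_congr rfl fun q hq =>
    sum_sum_ite_eq_mul_nsmul 0 p _ (by simp at hp; omega) (by simp at hp hq; omega)
      (by intros; simp at *; omega)

end AddCommMonoid

section AddCommGroup

variable {G : Type*} [AddCommGroup G]

theorem increasingQuadSum_sub (n : ℕ) (f g : ℕ → ℕ → ℕ → ℕ → G) :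
    increasingQuadSum n (fun i j k l => f i j k l - g i j k l) =
      increasingQuadSum n f - increasingQuadSum n g := by
  simp only [increasingQuadSum, ← sum_sub_distrib, ite_sub_ite, sub_zero]

theorem increasingPairSum_sub (n : ℕ) (g g' : ℕ → ℕ → G) :
    increasingPairSum n (fun p q => g p q - g' p q) =
      increasingPairSum n g - increasingPairSum n g' := by
  simp only [increasingPairSum, ← sum_sub_distrib, ite_sub_ite, sub_zero]

end AddCommGroup

theorem mul_increasingQuadSum {R : Type*} [NonUnitalNonAssocSemiring R] (n : ℕ) (c : R)
    (f : ℕ → ℕ → ℕ → ℕ → R) :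
    c * increasingQuadSum n f = increasingQuadSum n (fun i j k l => c * f i j k l) := by
  simp only [increasingQuadSum, mul_sum, mul_ite, mul_zero]

/-- The coefficient of `|A_p A_q|²` in `4 ∑ |M_ik M_jl|²` when `t` of the indices lie strictly
between `p` and `q` and `s` lie outside; the paper's `c_pq` is `-eulerCoeff s t`. -/
def eulerCoeff (s t : ℕ) : ℝ := s.choose 2 - s * t + t.choose 2

theorem sum_neg_one_pow_mul_choose_eq_neg_eulerCoeff (s t : ℕ) :
    ∑ r ∈ range 3, (-1 : ℝ) ^ (r + 1) * s.choose (2 - r) * t.choose r = -eulerCoeff s t := by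
  simp only [sum_range_succ, sum_range_zero, eulerCoeff]
  norm_num
  ring

theorem increasingQuadSum_euler (n : ℕ) (e : ℕ → ℕ → ℝ) :
    increasingQuadSum n (fun i j k l => e i j + e j k + e k l + e i l - e i k - e j l) =
      increasingPairSum n (fun p q => eulerCoeff (n - q + p - 1) (q - p - 1) * e p q) := by
  rw [increasingQuadSum_sub, increasingQuadSum_sub, increasingQuadSum_add, increasingQuadSum_add,
    increasingQuadSum_add, increasingQuadSum_ij, increasingQuadSum_jk,
    increasingQuadSum_kl, increasingQuadSum_il, increasingQuadSum_ik,
    increasingQuadSum_jl, ← increasingPairSum_add, ← increasingPairSum_add,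
    ← increasingPairSum_add, ← increasingPairSum_sub, ← increasingPairSum_sub]
  refine increasingPairSum_congr fun p q hp hpq hq => ?_
  obtain ⟨a, rfl⟩ : ∃ a, p = a + 1 := ⟨p - 1, by omega⟩
  obtain ⟨b, rfl⟩ : ∃ b, q = a + b + 2 := ⟨q - a - 2, by omega⟩
  obtain ⟨c, rfl⟩ : ∃ c, n = a + b + c + 2 := ⟨n - (a + b + 2), by omega⟩
  rw [show a + b + c + 2 - (a + b + 2) = c by omega, show a + 1 - 1 = a by omega,
    show a + b + 2 - (a + 1) - 1 = b by omega, show c + (a + 1) - 1 = a + c by omega]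
  simp only [nsmul_eq_mul, eulerCoeff, Nat.cast_mul, Nat.cast_add, Nat.cast_choose_two]
  ring

theorem four_mul_increasingQuadSum_dist_midpoint_sq {V P : Type*} [NormedAddCommGroup V]
    [InnerProductSpace ℝ V] [MetricSpace P] [NormedAddTorsor V P] (n : ℕ) (A : ℕ → P) :
    4 * increasingQuadSum n
        (fun i j k l => dist (midpoint ℝ (A i) (A k)) (midpoint ℝ (A j) (A l)) ^ 2) =
      increasingPairSum n
        (fun p q => eulerCoeff (n - q + p - 1) (q - p - 1) * dist (A p) (A q) ^ 2) := by
  rw [mul_increasingQuadSum]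
  simp only [four_mul_dist_midpoint_sq]
  exact increasingQuadSum_euler n fun p q => dist (A p) (A q) ^ 2

theorem eulerCoeff_of_cycle_edge {n p q : ℕ} (hp : 1 ≤ p) (hpq : p < q) (hq : q ≤ n)
    (hedge : ¬(1 < q - p ∧ q - p < n - 1)) :
    eulerCoeff (n - q + p - 1) (q - p - 1) = (n - 2).choose 2 := by
  rcases (show q = p + 1 ∨ (p = 1 ∧ q = n) by omega) with hq' | ⟨hp', hq'⟩
  · rw [show n - q + p - 1 = n - 2 by omega, show q - p - 1 = 0 by omega]
    simp [eulerCoeff]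
  · rw [show n - q + p - 1 = 0 by omega, show q - p - 1 = n - 2 by omega]
    simp [eulerCoeff]

theorem sum_sum_ite_cycle_edges {X M : Type*} [AddCommMonoid M] {n : ℕ} (hn : 3 ≤ n)
    (g : X → X → M) (hg : ∀ x y, g x y = g y x) (A : ℕ → X) (hcyc : A (n + 1) = A 1) :
    ∑ i ∈ Icc 1 n, ∑ j ∈ Icc 1 n,
        (if i < j ∧ ¬(1 < j - i ∧ j - i < n - 1) then g (A i) (A j) else 0) =
      ∑ i ∈ Icc 1 n, g (A i) (A (i + 1)) := by
  have hsplit : ∀ i ∈ Icc 1 n, ∀ j ∈ Icc 1 n,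
      (if i < j ∧ ¬(1 < j - i ∧ j - i < n - 1) then g (A i) (A j) else 0) =
        (if j = i + 1 then g (A i) (A j) else 0) + if j = n ∧ i = 1 then g (A i) (A j) else 0 := by
    intro i hi j hj
    simp only [mem_Icc] at hi hj
    split_ifs <;> first | omega | simp
  rw [sum_congr rfl fun i hi => sum_congr rfl (hsplit i hi)]
  obtain ⟨k, rfl⟩ : ∃ k, n = k + 1 := ⟨n - 1, by omega⟩
  have h1 : 1 ∈ Icc 1 (k + 1) := by simp
  have hn' : k + 1 ∈ Icc 1 (k + 1) := by simp
  simp only [sum_add_distrib, ite_and, sum_ite_eq', h1, hn', if_true]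
  rw [sum_Icc_succ_top (by omega), sum_Icc_succ_top (by omega), if_neg (by simp), add_zero, hcyc,
    hg (A (k + 1)), sum_congr rfl fun x hx => if_pos (by simp only [mem_Icc] at hx ⊢; omega)]

theorem generalized_euler_midpoints (m n : ℕ) (hn : 4 ≤ n)
    (A : ℕ → EuclideanSpace ℝ (Fin m)) (hcyc : A (n + 1) = A 1) :
    (Nat.choose (n - 2) 2 : ℝ) * ∑ i ∈ Finset.Icc 1 n, dist (A i) (A (i + 1)) ^ 2 =
      (∑ i ∈ Finset.Icc 1 n, ∑ j ∈ Finset.Icc 1 n,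
        if i < j ∧ 1 < j - i ∧ j - i < n - 1 then
          (∑ r ∈ Finset.range 3, (-1 : ℝ) ^ (r + 1) *
              Nat.choose (n - j + i - 1) (2 - r) * Nat.choose (j - i - 1) r) *
            dist (A i) (A j) ^ 2 else 0) +
      4 * ∑ i ∈ Finset.Icc 1 n, ∑ j ∈ Finset.Icc 1 n, ∑ k ∈ Finset.Icc 1 n,
        ∑ l ∈ Finset.Icc 1 n,
          if i < j ∧ j < k ∧ k < l then
            dist (midpoint ℝ (A i) (A k)) (midpoint ℝ (A j) (A l)) ^ 2 else 0 := by
  have hquad := four_mul_increasingQuadSum_dist_midpoint_sq n A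
  rw [increasingQuadSum, increasingPairSum] at hquad
  rw [hquad, ← sum_sum_ite_cycle_edges (by omega) (fun x y => dist x y ^ 2)
    (fun x y => by rw [dist_comm]) A hcyc, mul_sum, ← sum_add_distrib]
  refine sum_congr rfl fun i hi => ?_
  rw [mul_sum, ← sum_add_distrib]
  refine sum_congr rfl fun j hj => ?_
  simp only [mem_Icc] at hi hj
  rw [sum_neg_one_pow_mul_choose_eq_neg_eulerCoeff]
  by_cases hij : i < j
  · by_cases hedge : 1 < j - i ∧ j - i < n - 1
    · simp [hij, hedge]
    · simp [hij, hedge, eulerCoeff_of_cycle_edge hi.1 hij hj.2 hedge]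
  · simp [hij]
end
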